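/- arXiv:1401.4954 — 10 statements merged into one kernel-verified Lean document; each statement's English description precedes it below -/
import Mathlib

section
/- Let L be a finitely generated free ℤ-module and let Ω be a finite subset of L. The following are equivalent: (a) there exists a subset ω of Ω whose elements are ℤ-linearly independent and such that Ω ⊆ {0} ∪ ω ∪ (−ω); (b) every subset ϖ of Ω with ϖ ∩ (−ϖ) = ∅ has ℤ-linearly independent elements. -/
/-!
Changing the signs of some vectors of a linearly independent family keeps it independent, so a
subset of `{0} ∪ ω ∪ -ω` containing no pair `α, -α` (hence not `0`) is independent along with `ω`.
Conversely, since `L` has no `2`-torsion, `α ≠ -α` for `α ≠ 0`, and a well-order on `L` picks one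
element out of each pair `{α, -α} ⊆ Ω`; the set of these choices is a valid `ω`, being free of
opposite pairs.
-/

open Set

theorem LinearIndependent.of_subset_zero_union_union_neg {R M : Type*} [Ring R] [AddCommGroup M]
    [Module R M] {ω ϖ : Set M} (hω : LinearIndependent R ((↑) : ω → M))
    (hϖ : ϖ ⊆ {0} ∪ ω ∪ -ω) (hdisj : Disjoint ϖ (-ϖ)) :
    LinearIndependent R ((↑) : ϖ → M) := by
  classical
  have hopp : ∀ x ∈ ϖ, -x ∉ ϖ := fun x hx hx' => disjoint_left.mp hdisj hx hx'
  have hneg : ∀ x ∈ ϖ, x ∉ ω → -x ∈ ω := by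
    intro x hx hxω
    rcases hϖ hx with (rfl | h) | h
    · exact absurd (by rwa [neg_zero]) (hopp 0 hx)
    · exact absurd h hxω
    · exact h
  let g : ϖ → ω := fun x => if h : (x : M) ∈ ω then ⟨x, h⟩ else ⟨-x, hneg x x.2 h⟩
  have hg : Function.Injective g := by
    rintro ⟨x, hx⟩ ⟨y, hy⟩ hxy
    simp only [g] at hxy
    split_ifs at hxy <;> simp only [Subtype.mk.injEq] at hxy <;> rw [Subtype.mk.injEq]
    · exact hxy
    · exact absurd (hxy ▸ hx) (hopp y hy)
    · exact absurd (hxy ▸ hy) (hopp x hx)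
    · exact neg_injective hxy
  convert (hω.comp g hg).units_smul (fun x => if (x : M) ∈ ω then 1 else -1)
  ext x
  by_cases h : (x : M) ∈ ω <;> simp [g, h]

theorem exists_subset_disjoint_neg_of_isAddTorsionFree {G : Type*} [AddGroup G]
    [IsAddTorsionFree G] (Ω : Set G) : ∃ ω ⊆ Ω, Disjoint ω (-ω) ∧ Ω ⊆ {0} ∪ ω ∪ -ω := by
  let _ : LinearOrder G := IsWellOrder.linearOrder WellOrderingRel
  refine ⟨{α ∈ Ω | α ≠ 0 ∧ (-α ∈ Ω → α < -α)}, fun α hα => hα.1, ?_, ?_⟩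
  · refine disjoint_left.mpr fun α ⟨hαΩ, _, hlt⟩ ⟨hnαΩ, _, hnlt⟩ => ?_
    exact (hlt hnαΩ).asymm (by simpa using hnlt (by simpa using hαΩ))
  · intro α hα
    by_cases h0 : α = 0
    · exact Or.inl (Or.inl h0)
    by_cases hnα : -α ∈ Ω
    · rcases (show α ≠ -α from mt self_eq_neg.mp h0).lt_or_gt with hlt | hgt
      · exact Or.inl (Or.inr ⟨hα, h0, fun _ => hlt⟩)
      · exact Or.inr ⟨hnα, neg_ne_zero.mpr h0, fun _ => by simpa using hgt⟩
    · exact Or.inl (Or.inr ⟨hα, h0, fun h => absurd h hnα⟩)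
theorem stmt_0_general (L : Type*) [AddCommGroup L] [Module ℤ L] [Module.Free ℤ L]
    (Ω : Set L) :
    (∃ ω ⊆ Ω, LinearIndependent ℤ ((↑) : ω → L) ∧ Ω ⊆ {0} ∪ ω ∪ (-ω)) ↔
      (∀ ϖ ⊆ Ω, ϖ ∩ (-ϖ) = ∅ → LinearIndependent ℤ ((↑) : ϖ → L)) := by
  constructor
  · rintro ⟨ω, -, hω, hcov⟩ ϖ hϖΩ hdisj
    exact hω.of_subset_zero_union_union_neg (hϖΩ.trans hcov)
      (disjoint_iff_inter_eq_empty.mpr hdisj)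
  · intro h
    have : IsAddTorsionFree L := .of_isTorsionFree ℤ L
    obtain ⟨ω, hωΩ, hdisj, hcov⟩ := exists_subset_disjoint_neg_of_isAddTorsionFree Ω
    exact ⟨ω, hωΩ, h ω hωΩ (disjoint_iff_inter_eq_empty.mp hdisj), hcov⟩

/-- A finite subset `Ω` of a finitely generated free `ℤ`-module is "presque libre" (PL)
iff there is a `ℤ`-linearly independent subset `ω ⊆ Ω` with `Ω ⊆ {0} ∪ ω ∪ (-ω)`,
iff every subset `ϖ ⊆ Ω` with `ϖ ∩ (-ϖ) = ∅` is `ℤ`-linearly independent. -/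
theorem stmt_0 (L : Type*) [AddCommGroup L] [Module ℤ L] [Module.Free ℤ L]
    [Module.Finite ℤ L] (Ω : Set L) (hΩ : Ω.Finite) :
    (∃ ω ⊆ Ω, LinearIndependent ℤ ((↑) : ω → L) ∧ Ω ⊆ {0} ∪ ω ∪ (-ω)) ↔
      (∀ ϖ ⊆ Ω, ϖ ∩ (-ϖ) = ∅ → LinearIndependent ℤ ((↑) : ϖ → L)) :=
  stmt_0_general L Ω
end

section
/- Let n ≥ 1. In ℤⁿ with standard basis e₁,…,eₙ, let M be the group of signed permutation automorphisms, i.e. ℤ-linear automorphisms of the form e_i ↦ λ_i e_{π(i)} with π a permutation of {1,…,n} and each λ_i ∈ {1,−1}. Call an element of M a reflection if it is one of: t_i (sending e_i to −e_i and fixing e_ℓ for ℓ ≠ i), s_{ij} for i ≠ j (exchanging e_i and e_j and fixing the other basis vectors), or s'_{ij} for i ≠ j (sending e_i to −e_j and e_j to −e_i and fixing the other basis vectors). Suppose W is a subgroup of M which is generated by the reflections it contains and which acts transitively on the set {e₁,…,eₙ,−e₁,…,−eₙ}. Then W = M, or W equals the index-2 subgroup M⁺ of M consisting of the elements whose sign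 vector satisfies ∏ᵢ λᵢ = 1. -/
/-- The standard basis vector `e i` of `ℤⁿ`. -/
def sgnE (n : ℕ) (i : Fin n) : Fin n → ℤ := Pi.single i 1

/-- An automorphism of `ℤⁿ` is a signed permutation if it sends each `e i` to
`λ i • e (π i)` for some permutation `π` and signs `λ i ∈ {1, -1}`. -/
def IsSignedPerm {n : ℕ} (f : (Fin n → ℤ) ≃ₗ[ℤ] (Fin n → ℤ)) : Prop :=
  ∃ (π : Equiv.Perm (Fin n)) (lam : Fin n → ℤ),
    (∀ i, lam i = 1 ∨ lam i = -1) ∧ ∀ i, f (sgnE n i) = lam i • sgnE n (π i)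

/-- A signed permutation automorphism whose sign vector has product `1`
(an element of the Weyl group of type `Dₙ`). -/
def IsSignedPermPos {n : ℕ} (f : (Fin n → ℤ) ≃ₗ[ℤ] (Fin n → ℤ)) : Prop :=
  ∃ (π : Equiv.Perm (Fin n)) (lam : Fin n → ℤ),
    (∀ i, lam i = 1 ∨ lam i = -1) ∧ (∀ i, f (sgnE n i) = lam i • sgnE n (π i)) ∧
      ∏ i, lam i = 1

/-- The reflections among signed permutations: the `t i` (sending `e i` to `-e i` and
fixing the other basis vectors), the `s i j` (exchanging `e i` and `e j`), and the
`s' i j` (sending `e i` to `-e j`, `e j` to `-e i`). -/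
def IsSgnReflection {n : ℕ} (f : (Fin n → ℤ) ≃ₗ[ℤ] (Fin n → ℤ)) : Prop :=
  (∃ i, f (sgnE n i) = -(sgnE n i) ∧ ∀ l, l ≠ i → f (sgnE n l) = sgnE n l) ∨
  (∃ i j, i ≠ j ∧ f (sgnE n i) = sgnE n j ∧ f (sgnE n j) = sgnE n i ∧
    ∀ l, l ≠ i → l ≠ j → f (sgnE n l) = sgnE n l) ∨
  (∃ i j, i ≠ j ∧ f (sgnE n i) = -(sgnE n j) ∧ f (sgnE n j) = -(sgnE n i) ∧
    ∀ l, l ≠ i → l ≠ j → f (sgnE n l) = sgnE n l)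

/-!
Every reflection has the form `signedSwap a b ε : e a ↦ ε e b, e b ↦ ε e a`. As `W` is generated
by such involutions, any set of vectors that the reflections of `W` map into itself is preserved
by `W`. Applied to `{±e k | k joined to i by a reflection of W}`, transitivity shows that any two
indices are joined by a reflection of `W`.

Call a pair `a, b` full if `signedSwap a b ε ∈ W` for both signs (for `a = b`: `t a ∈ W`).
If no pair is full, the sign `ε a b` of the reflection joining `a` and `b` is unique, conjugation
shows `ε a b = δ a * δ b`, and then `W` preserves `{δ k • e k}`, so it cannot send `e i` to `-e i`.
Hence some pair is full, and conjugating spreads fullness to all pairs `i ≠ j`. The `s i j` and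
`s' i j` generate `M⁺`, so `M⁺ ≤ W`. If some `t a ∈ W` then `W = M = M⁺ ∪ M⁺ t a`; otherwise
every reflection of `W` lies in `M⁺`, so `W = M⁺`.
-/

open Equiv Pointwise

lemma exists_units_coe_eq {ι : Type*} {lam : ι → ℤ} (h : ∀ i, lam i = 1 ∨ lam i = -1) :
    ∃ u : ι → ℤˣ, ∀ i, (u i : ℤ) = lam i :=
  ⟨fun i => (Int.isUnit_iff.2 (h i)).unit, fun _ => IsUnit.unit_spec _⟩

lemma Subgroup.closure_le_stabilizer_of_involutive {G α : Type*} [Group G] [MulAction G α]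
    {S : Set G} {A : Set α} (hS : ∀ g ∈ S, g * g = 1 ∧ ∀ x ∈ A, g • x ∈ A) :
    Subgroup.closure S ≤ MulAction.stabilizer G A := by
  refine (Subgroup.closure_le _).2 fun g hg => MulAction.mem_stabilizer_set.2 fun x => ?_
  refine ⟨fun hx => ?_, (hS g hg).2 x⟩
  simpa [smul_smul, (hS g hg).1] using (hS g hg).2 _ hx

namespace SignedPerm

abbrev Aut (n : ℕ) := (Fin n → ℤ) ≃ₗ[ℤ] (Fin n → ℤ)

variable {n : ℕ}

lemma sgnE_ext {f g : Aut n} (h : ∀ i, f (sgnE n i) = g (sgnE n i)) : f = g :=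
  LinearEquiv.toLinearMap_injective <|
    (Pi.basisFun ℤ (Fin n)).ext fun i => by simpa [sgnE] using h i

lemma units_smul_sgnE_inj {c d : ℤˣ} {j k : Fin n}
    (h : (c : ℤ) • sgnE n j = (d : ℤ) • sgnE n k) : j = k ∧ c = d := by
  have hj := congrFun h j
  by_cases hjk : j = k
  · subst hjk
    exact ⟨rfl, Units.ext (by simpa [sgnE] using hj)⟩
  · simp [sgnE, hjk] at hj

def signedPerm (π : Perm (Fin n)) (u : Fin n → ℤˣ) : Aut n where
  toFun v j := u (π.symm j) * v (π.symm j)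
  invFun v i := u i * v (π i)
  map_add' v w := by funext j; simp [mul_add]
  map_smul' c v := by funext j; simp only [Pi.smul_apply, smul_eq_mul, RingHom.id_apply]; ring
  left_inv v := by funext i; simp [← mul_assoc, ← Units.val_mul, Int.units_mul_self]
  right_inv v := by funext j; simp [← mul_assoc, ← Units.val_mul, Int.units_mul_self]

@[simp]
lemma signedPerm_apply_sgnE (π : Perm (Fin n)) (u : Fin n → ℤˣ) (i : Fin n) :
    signedPerm π u (sgnE n i) = (u i : ℤ) • sgnE n (π i) := by
  funext j
  by_cases hj : j = π i
  · subst hj; simp [signedPerm, sgnE]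
  · have : π.symm j ≠ i := fun h => hj (by rw [← h, apply_symm_apply])
    simp [signedPerm, sgnE, hj, this]

lemma signedPerm_mul (π σ : Perm (Fin n)) (u v : Fin n → ℤˣ) :
    signedPerm π u * signedPerm σ v = signedPerm (π * σ) (fun i => v i * u (σ i)) :=
  sgnE_ext fun i => by
    rw [LinearEquiv.mul_apply, signedPerm_apply_sgnE, map_smul, signedPerm_apply_sgnE, smul_smul,
      signedPerm_apply_sgnE, Units.val_mul, mul_comm]
    rfl

lemma signedPerm_one : signedPerm (1 : Perm (Fin n)) 1 = 1 :=
  sgnE_ext fun i => by simp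

lemma signedPerm_inv (π : Perm (Fin n)) (u : Fin n → ℤˣ) :
    (signedPerm π u)⁻¹ = signedPerm π⁻¹ (fun j => u (π⁻¹ j)) := by
  refine inv_eq_of_mul_eq_one_right ?_
  rw [signedPerm_mul, mul_inv_cancel, ← signedPerm_one]
  simp [Int.units_mul_self]
  rfl

lemma isSignedPerm_iff {f : Aut n} : IsSignedPerm f ↔ ∃ π u, f = signedPerm π u := by
  constructor
  · rintro ⟨π, lam, hlam, hf⟩
    obtain ⟨u, hu⟩ := exists_units_coe_eq hlam
    exact ⟨π, u, sgnE_ext fun i => by rw [hf, signedPerm_apply_sgnE, hu]⟩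
  · rintro ⟨π, u, rfl⟩
    exact ⟨π, fun i => u i, fun i => Int.isUnit_iff.1 (u i).isUnit, signedPerm_apply_sgnE π u⟩

lemma isSignedPermPos_iff {f : Aut n} :
    IsSignedPermPos f ↔ ∃ π u, f = signedPerm π u ∧ ∏ i, u i = 1 := by
  constructor
  · rintro ⟨π, lam, hlam, hf, hprod⟩
    obtain ⟨u, hu⟩ := exists_units_coe_eq hlam
    refine ⟨π, u, sgnE_ext fun i => by rw [hf, signedPerm_apply_sgnE, hu], Units.ext ?_⟩
    simpa [hu] using hprod
  · rintro ⟨π, u, rfl, hu⟩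
    refine ⟨π, fun i => u i, fun i => Int.isUnit_iff.1 (u i).isUnit, signedPerm_apply_sgnE π u, ?_⟩
    rw [← Units.coe_prod, hu, Units.val_one]

variable (n) in
def signedPermPos : Subgroup (Aut n) where
  carrier := {f | IsSignedPermPos f}
  one_mem' := isSignedPermPos_iff.2 ⟨1, 1, signedPerm_one.symm, Finset.prod_const_one⟩
  mul_mem' hf hg := by
    obtain ⟨π, u, rfl, hu⟩ := isSignedPermPos_iff.1 hf
    obtain ⟨σ, v, rfl, hv⟩ := isSignedPermPos_iff.1 hg
    refine isSignedPermPos_iff.2 ⟨π * σ, _, signedPerm_mul π σ u v, ?_⟩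
    rw [Finset.prod_mul_distrib, hv, Equiv.prod_comp σ u, hu, one_mul]
  inv_mem' hf := by
    obtain ⟨π, u, rfl, hu⟩ := isSignedPermPos_iff.1 hf
    exact isSignedPermPos_iff.2 ⟨π⁻¹, _, signedPerm_inv π u, by rw [Equiv.prod_comp π⁻¹ u, hu]⟩

def diagHom : (Fin n → ℤˣ) →* Aut n where
  toFun := signedPerm 1
  map_one' := signedPerm_one
  map_mul' u v := by rw [signedPerm_mul, mul_one, mul_comm u]; rfl

lemma signedPerm_mul_diagHom (π : Perm (Fin n)) (u v : Fin n → ℤˣ) :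
    signedPerm π u * diagHom v = signedPerm π (v * u) := by
  rw [diagHom, MonoidHom.coe_mk, OneHom.coe_mk, signedPerm_mul, mul_one]
  rfl

def signVec (a b : Fin n) (ε : ℤˣ) : Fin n → ℤˣ := fun l => if l = a ∨ l = b then ε else 1

lemma signVec_one (a b : Fin n) : signVec a b 1 = 1 := funext fun l => by simp [signVec]

lemma signVec_comm (a b : Fin n) (ε : ℤˣ) : signVec a b ε = signVec b a ε :=
  funext fun l => by simp [signVec, or_comm]

lemma signVec_self (a : Fin n) (ε : ℤˣ) : signVec a a ε = Pi.mulSingle a ε :=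
  funext fun l => by simp [signVec, Pi.mulSingle_apply]

lemma signVec_of_ne {a b : Fin n} (hab : a ≠ b) (ε : ℤˣ) :
    signVec a b ε = Pi.mulSingle a ε * Pi.mulSingle b ε := by
  funext l
  by_cases ha : l = a
  · subst ha; simp [signVec, hab]
  · by_cases hb : l = b
    · subst hb; simp [signVec, ha]
    · simp [signVec, ha, hb]

lemma signVec_swap_apply (a b l : Fin n) (ε : ℤˣ) :
    signVec a b ε (swap a b l) = signVec a b ε l := by
  by_cases ha : l = a
  · subst ha; simp [signVec]
  · by_cases hb : l = b
    · subst hb; simp [signVec]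
    · rw [swap_apply_of_ne_of_ne ha hb]

lemma prod_signVec_of_ne {a b : Fin n} (hab : a ≠ b) (ε : ℤˣ) : ∏ l, signVec a b ε l = 1 := by
  simp [signVec_of_ne hab, Finset.prod_mul_distrib, Finset.prod_pi_mulSingle', Int.units_mul_self]

/-- For `a ≠ b` this is `s a b` (`ε = 1`) or `s' a b` (`ε = -1`); for `a = b` it is `t a`
(`ε = -1`) or the identity (`ε = 1`). -/
def signedSwap (a b : Fin n) (ε : ℤˣ) : Aut n := signedPerm (swap a b) (signVec a b ε)

lemma signedSwap_apply_sgnE (a b l : Fin n) (ε : ℤˣ) :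
    signedSwap a b ε (sgnE n l) = (signVec a b ε l : ℤ) • sgnE n (swap a b l) :=
  signedPerm_apply_sgnE _ _ l

lemma signedSwap_comm (a b : Fin n) (ε : ℤˣ) : signedSwap a b ε = signedSwap b a ε := by
  rw [signedSwap, signedSwap, swap_comm, signVec_comm]

lemma signedSwap_one (a b : Fin n) : signedSwap a b 1 = signedPerm (swap a b) 1 := by
  rw [signedSwap, signVec_one]

lemma signedSwap_self_one (a : Fin n) : signedSwap a a 1 = 1 := by
  rw [signedSwap_one, swap_self]
  exact signedPerm_one

lemma signedSwap_self (a : Fin n) (ε : ℤˣ) : signedSwap a a ε = diagHom (Pi.mulSingle a ε) := by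
  rw [signedSwap, swap_self, signVec_self]
  rfl

lemma signedSwap_mul_signedSwap (a b : Fin n) (ε ε' : ℤˣ) :
    signedSwap a b ε * signedSwap a b ε' = diagHom (signVec a b (ε * ε')) := by
  rw [signedSwap, signedSwap, signedPerm_mul, swap_mul_self]
  congr 1
  funext l
  rw [signVec_swap_apply]
  simp only [signVec]
  split_ifs <;> simp [mul_comm]

lemma signedSwap_apply_left (a b : Fin n) (ε : ℤˣ) :
    signedSwap a b ε (sgnE n a) = (ε : ℤ) • sgnE n b := by
  simp [signedSwap_apply_sgnE, signVec]

lemma signedSwap_apply_right (a b : Fin n) (ε : ℤˣ) :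
    signedSwap a b ε (sgnE n b) = (ε : ℤ) • sgnE n a := by
  rw [signedSwap_comm, signedSwap_apply_left]

lemma signedSwap_apply_of_ne {a b l : Fin n} (ha : l ≠ a) (hb : l ≠ b) (ε : ℤˣ) :
    signedSwap a b ε (sgnE n l) = sgnE n l := by
  simp [signedSwap_apply_sgnE, signVec, ha, hb, swap_apply_of_ne_of_ne ha hb]

lemma eq_signedSwap {f : Aut n} {a b : Fin n} {ε : ℤˣ}
    (ha : f (sgnE n a) = (ε : ℤ) • sgnE n b) (hb : f (sgnE n b) = (ε : ℤ) • sgnE n a)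
    (hl : ∀ l, l ≠ a → l ≠ b → f (sgnE n l) = sgnE n l) : f = signedSwap a b ε := by
  refine sgnE_ext fun l => ?_
  by_cases h : l = a
  · rw [h, ha, signedSwap_apply_left]
  · by_cases h' : l = b
    · rw [h', hb, signedSwap_apply_right]
    · rw [hl l h h', signedSwap_apply_of_ne h h']

lemma exists_eq_signedSwap_of_isSgnReflection {f : Aut n} (hf : IsSgnReflection f) :
    ∃ a b ε, f = signedSwap a b ε := by
  rcases hf with ⟨i, hi, hl⟩ | ⟨i, j, -, hi, hj, hl⟩ | ⟨i, j, -, hi, hj, hl⟩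
  · exact ⟨i, i, -1, eq_signedSwap (by simpa using hi) (by simpa using hi) fun l h _ => hl l h⟩
  · exact ⟨i, j, 1, eq_signedSwap (by simpa using hi) (by simpa using hj) hl⟩
  · exact ⟨i, j, -1, eq_signedSwap (by simpa using hi) (by simpa using hj) hl⟩

lemma signedPerm_mul_signedSwap (π : Perm (Fin n)) (u : Fin n → ℤˣ) (a b : Fin n) (ε : ℤˣ) :
    signedPerm π u * signedSwap a b ε =
      signedSwap (π a) (π b) (ε * u a * u b) * signedPerm π u := by
  rw [signedSwap, signedSwap, signedPerm_mul, signedPerm_mul, mul_swap_eq_swap_mul]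
  congr 1
  funext i
  simp only [signVec, π.injective.eq_iff]
  by_cases ha : i = a
  · subst ha; simp [mul_comm, mul_left_comm, Int.units_mul_self]
  · by_cases hb : i = b
    · subst hb; simp [mul_comm, mul_left_comm, Int.units_mul_self]
    · simp [ha, hb, swap_apply_of_ne_of_ne ha hb]

section Subgroup

variable {W : Subgroup (Aut n)}

lemma signedSwap_mem_of_conj {π : Perm (Fin n)} {u : Fin n → ℤˣ} {a b : Fin n} {ε : ℤˣ}
    (hw : signedPerm π u ∈ W) (h : signedSwap a b ε ∈ W) :
    signedSwap (π a) (π b) (ε * u a * u b) ∈ W := by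
  rw [eq_mul_inv_of_mul_eq (signedPerm_mul_signedSwap π u a b ε).symm]
  exact mul_mem (mul_mem hw h) (inv_mem hw)

lemma signedSwap_mem_trans {x y z : Fin n} {ε θ : ℤˣ} (hxz : x ≠ z)
    (h₁ : signedSwap x y ε ∈ W) (h₂ : signedSwap y z θ ∈ W) : signedSwap x z (ε * θ) ∈ W := by
  by_cases hxy : x = y
  · subst hxy
    have := signedSwap_mem_of_conj (π := swap x x) h₁ h₂
    simpa [signVec, hxz.symm, mul_comm] using this
  · have := signedSwap_mem_of_conj (π := swap y z) h₂ h₁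
    rwa [swap_apply_of_ne_of_ne hxy hxz, swap_apply_left, signVec, signVec, if_neg (by tauto),
      if_pos (Or.inl rfl), mul_one] at this

def Linked (W : Subgroup (Aut n)) (i j : Fin n) : Prop := ∃ ε, signedSwap i j ε ∈ W

def IsFull (W : Subgroup (Aut n)) (i j : Fin n) : Prop := ∀ ε, signedSwap i j ε ∈ W

lemma Linked.refl (i : Fin n) : Linked W i i := ⟨1, by rw [signedSwap_self_one]; exact one_mem W⟩

lemma Linked.symm {i j : Fin n} (h : Linked W i j) : Linked W j i := by
  obtain ⟨ε, hε⟩ := h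
  exact ⟨ε, signedSwap_comm i j ε ▸ hε⟩

lemma Linked.trans {i j k : Fin n} (h₁ : Linked W i j) (h₂ : Linked W j k) : Linked W i k := by
  by_cases hik : i = k
  · exact hik ▸ Linked.refl i
  · obtain ⟨ε, hε⟩ := h₁
    obtain ⟨θ, hθ⟩ := h₂
    exact ⟨_, signedSwap_mem_trans hik hε hθ⟩

lemma linked_swap_apply {a b : Fin n} {ε : ℤˣ} (h : signedSwap a b ε ∈ W) (l : Fin n) :
    Linked W l (swap a b l) := by
  by_cases ha : l = a
  · rw [ha, swap_apply_left]; exact ⟨ε, h⟩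
  · by_cases hb : l = b
    · rw [hb, swap_apply_right]; exact Linked.symm ⟨ε, h⟩
    · rw [swap_apply_of_ne_of_ne ha hb]; exact Linked.refl l

lemma IsFull.symm {i j : Fin n} (h : IsFull W i j) : IsFull W j i :=
  fun ε => signedSwap_comm i j ε ▸ h ε

lemma IsFull.trans_linked {x y z : Fin n} (h : IsFull W x y) (h' : Linked W y z) (hxz : x ≠ z) :
    IsFull W x z := by
  obtain ⟨θ, hθ⟩ := h'
  intro ε
  simpa [mul_assoc, Int.units_mul_self] using signedSwap_mem_trans hxz (h (ε * θ)) hθ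

lemma IsFull.of_ne (hlink : ∀ i j, Linked W i j) {a b : Fin n} (h : IsFull W a b) {x y : Fin n}
    (hxy : x ≠ y) : IsFull W x y := by
  have hfull : ∀ z, z ≠ a → IsFull W a z := fun z hz => h.trans_linked (hlink b z) hz.symm
  by_cases hx : x = a
  · exact hx ▸ hfull y (hx ▸ hxy.symm)
  · exact (hfull x hx).symm.trans_linked (hlink a y) hxy

lemma mapsTo_of_forall_signedSwap (hgen : W = Subgroup.closure {f | f ∈ W ∧ IsSgnReflection f})
    {A : Set (Fin n → ℤ)} (hA : ∀ a b ε, signedSwap a b ε ∈ W → Set.MapsTo (signedSwap a b ε) A A)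
    {w : Aut n} (hw : w ∈ W) : Set.MapsTo w A A := by
  have hle : W ≤ MulAction.stabilizer (Aut n) A := by
    refine hgen.trans_le (Subgroup.closure_le_stabilizer_of_involutive ?_)
    rintro _ ⟨hfW, hf⟩
    obtain ⟨a, b, ε, rfl⟩ := exists_eq_signedSwap_of_isSgnReflection hf
    refine ⟨by rw [signedSwap_mul_signedSwap, Int.units_mul_self, signVec_one, map_one], ?_⟩
    exact hA a b ε hfW
  exact fun v hv => (MulAction.mem_stabilizer_set.1 (hle hw) v).2 hv

lemma linked_of_transitive (hgen : W = Subgroup.closure {f | f ∈ W ∧ IsSgnReflection f})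
    (htrans : ∀ i j, ∃ w ∈ W, w (sgnE n i) = sgnE n j) (i j : Fin n) : Linked W i j := by
  let A : Set (Fin n → ℤ) := {v | ∃ k, ∃ c : ℤˣ, Linked W i k ∧ v = (c : ℤ) • sgnE n k}
  have hA : ∀ a b ε, signedSwap a b ε ∈ W → Set.MapsTo (signedSwap a b ε) A A := by
    rintro a b ε h _ ⟨k, c, hik, rfl⟩
    refine ⟨swap a b k, c * signVec a b ε k, hik.trans (linked_swap_apply h k), ?_⟩
    rw [map_smul, signedSwap_apply_sgnE, smul_smul, Units.val_mul]
  obtain ⟨w, hw, hwij⟩ := htrans i j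
  obtain ⟨k, c, hik, hk⟩ := mapsTo_of_forall_signedSwap hgen hA hw
    (show sgnE n i ∈ A from ⟨i, 1, Linked.refl i, by simp⟩)
  rw [hwij, ← one_smul ℤ (sgnE n j)] at hk
  obtain ⟨rfl, -⟩ := units_smul_sgnE_inj (c := 1) hk
  exact hik

lemma exists_sign_of_not_isFull (hlink : ∀ i j, Linked W i j) (hnot : ∀ a b, ¬IsFull W a b)
    (i₀ : Fin n) : ∃ δ : Fin n → ℤˣ, ∀ a b ε, signedSwap a b ε ∈ W → ε = δ a * δ b := by
  have huniq : ∀ a b ε ε', signedSwap a b ε ∈ W → signedSwap a b ε' ∈ W → ε = ε' := by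
    intro a b ε ε' h h'
    by_contra hne
    refine hnot a b fun θ => ?_
    rcases Int.units_eq_one_or ε with rfl | rfl <;> rcases Int.units_eq_one_or ε' with rfl | rfl <;>
      rcases Int.units_eq_one_or θ with rfl | rfl <;> first | assumption | exact absurd rfl hne
  choose δ hδ using hlink i₀
  refine ⟨δ, fun a b ε h => ?_⟩
  by_cases hab : a = b
  · subst hab
    rw [Int.units_mul_self]
    exact huniq a a ε 1 h (by rw [signedSwap_self_one]; exact one_mem W)
  · exact huniq a b _ _ h (signedSwap_mem_trans hab (signedSwap_comm i₀ a _ ▸ hδ a) (hδ b))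

lemma apply_sgnE_ne_neg (hgen : W = Subgroup.closure {f | f ∈ W ∧ IsSgnReflection f})
    {δ : Fin n → ℤˣ} (hδ : ∀ a b ε, signedSwap a b ε ∈ W → ε = δ a * δ b) {w : Aut n}
    (hw : w ∈ W) (i : Fin n) : w (sgnE n i) ≠ -sgnE n i := by
  let A : Set (Fin n → ℤ) := {v | ∃ k, v = (δ k : ℤ) • sgnE n k}
  have hA : ∀ a b ε, signedSwap a b ε ∈ W → Set.MapsTo (signedSwap a b ε) A A := by
    rintro a b ε h _ ⟨k, rfl⟩
    obtain rfl := hδ a b ε h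
    refine ⟨swap a b k, ?_⟩
    rw [map_smul, signedSwap_apply_sgnE, smul_smul, ← Units.val_mul]
    congr 3
    by_cases ha : k = a
    · subst ha; simp [signVec, ← mul_assoc, Int.units_mul_self]
    · by_cases hb : k = b
      · subst hb; simp [signVec, mul_left_comm _ (δ a), Int.units_mul_self]
      · simp [signVec, ha, hb, swap_apply_of_ne_of_ne ha hb]
  intro hwi
  obtain ⟨k, hk⟩ :=
    mapsTo_of_forall_signedSwap hgen hA hw (show (δ i : ℤ) • sgnE n i ∈ A from ⟨i, rfl⟩)
  rw [map_smul, hwi, smul_neg, ← neg_smul, ← Units.val_neg] at hk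
  obtain ⟨rfl, hneg⟩ := units_smul_sgnE_inj hk
  exact neg_units_ne_self _ hneg

lemma exists_isFull (hgen : W = Subgroup.closure {f | f ∈ W ∧ IsSgnReflection f})
    (hlink : ∀ i j, Linked W i j) {i₀ : Fin n} (h : ∃ w ∈ W, w (sgnE n i₀) = -sgnE n i₀) :
    ∃ a b, IsFull W a b := by
  by_contra! hnot
  obtain ⟨δ, hδ⟩ := exists_sign_of_not_isFull hlink hnot i₀
  obtain ⟨w, hw, hwi⟩ := h
  exact apply_sgnE_ne_neg hgen hδ hw i₀ hwi

lemma signedPerm_one_mem (h : ∀ a b, a ≠ b → signedSwap a b 1 ∈ W) (π : Perm (Fin n)) :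
    signedPerm π 1 ∈ W := by
  refine Perm.swap_induction_on π (signedPerm_one ▸ one_mem W) fun σ a b hab hσ => ?_
  have := mul_mem (h a b hab) hσ
  rwa [signedSwap_one, signedPerm_mul] at this

lemma diagHom_mem_of_prod_eq_one (hpair : ∀ i j, i ≠ j → IsFull W i j) (i₀ : Fin n)
    {u : Fin n → ℤˣ} (hu : ∏ i, u i = 1) : diagHom u ∈ W := by
  suffices u ∈ W.comap diagHom from this
  -- pair each sign `u i` with the same sign at `i₀`; the extra signs at `i₀` cancel as `∏ u = 1`
  have hu' : u = ∏ i, Pi.mulSingle i (u i) * Pi.mulSingle i₀ (u i) := by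
    have h₀ : ∏ i, (Pi.mulSingle i₀ (u i) : Fin n → ℤˣ) = Pi.mulSingle i₀ (∏ i, u i) :=
      (map_prod (MonoidHom.mulSingle (fun _ : Fin n => ℤˣ) i₀) u _).symm
    rw [Finset.prod_mul_distrib, Finset.univ_prod_mulSingle, h₀, hu, Pi.mulSingle_one, mul_one]
  rw [hu']
  refine Subgroup.prod_mem _ fun i _ => ?_
  by_cases hi : i = i₀
  · rw [hi, ← Pi.mulSingle_mul, Int.units_mul_self, Pi.mulSingle_one]
    exact one_mem _
  · have := mul_mem (hpair i i₀ hi (u i)) (hpair i i₀ hi 1)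
    rwa [signedSwap_mul_signedSwap, mul_one, signVec_of_ne hi] at this

lemma mem_of_isSignedPermPos (hpair : ∀ i j, i ≠ j → IsFull W i j) (i₀ : Fin n) {f : Aut n}
    (hf : IsSignedPermPos f) : f ∈ W := by
  obtain ⟨π, u, rfl, hu⟩ := isSignedPermPos_iff.1 hf
  rw [← mul_one u, ← signedPerm_mul_diagHom]
  exact mul_mem (signedPerm_one_mem (fun a b hab => hpair a b hab 1) π)
    (diagHom_mem_of_prod_eq_one hpair i₀ hu)

lemma mem_of_isSignedPerm (hpair : ∀ i j, i ≠ j → IsFull W i j) {a : Fin n}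
    (ht : signedSwap a a (-1) ∈ W) {f : Aut n} (hf : IsSignedPerm f) : f ∈ W := by
  obtain ⟨π, u, rfl⟩ := isSignedPerm_iff.1 hf
  rcases Int.units_eq_one_or (∏ i, u i) with hu | hu
  · exact mem_of_isSignedPermPos hpair a (isSignedPermPos_iff.2 ⟨π, u, rfl, hu⟩)
  · have hprod : ∏ i, (Pi.mulSingle a (-1) * u : Fin n → ℤˣ) i = 1 := by
      simp [Finset.prod_mul_distrib, Finset.prod_pi_mulSingle', hu]
    have := mem_of_isSignedPermPos hpair a (isSignedPermPos_iff.2 ⟨π, _, rfl, hprod⟩)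
    rw [← signedPerm_mul_diagHom, ← signedSwap_self] at this
    simpa using mul_mem this (inv_mem ht)

lemma le_signedPermPos (hgen : W = Subgroup.closure {f | f ∈ W ∧ IsSgnReflection f})
    (ht : ∀ a, signedSwap a a (-1) ∉ W) : W ≤ signedPermPos n := by
  refine hgen.trans_le ((Subgroup.closure_le _).2 ?_)
  rintro _ ⟨hfW, hf⟩
  obtain ⟨a, b, ε, rfl⟩ := exists_eq_signedSwap_of_isSgnReflection hf
  by_cases hab : a = b
  · subst hab
    obtain rfl : ε = 1 := (Int.units_eq_one_or ε).resolve_right (by rintro rfl; exact ht a hfW)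
    rw [signedSwap_self_one]
    exact one_mem _
  · exact isSignedPermPos_iff.2 ⟨_, _, rfl, prod_signVec_of_ne hab ε⟩

end Subgroup

end SignedPerm

open SignedPerm

/-- If a subgroup `W` of the group of signed permutation automorphisms of `ℤⁿ` (`n ≥ 1`)
is generated by the reflections it contains and acts transitively on
`{e₁, …, eₙ, -e₁, …, -eₙ}`, then `W` is the full signed permutation group `M` or the
index-2 subgroup `M⁺` of elements with sign product `1`. -/
theorem stmt_1 (n : ℕ) (hn : 1 ≤ n)
    (W : Subgroup ((Fin n → ℤ) ≃ₗ[ℤ] (Fin n → ℤ)))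
    (hsub : ∀ f ∈ W, IsSignedPerm f)
    (hgen : W = Subgroup.closure {f | f ∈ W ∧ IsSgnReflection f})
    (htrans : ∀ x ∈ {v : Fin n → ℤ | ∃ i, v = sgnE n i ∨ v = -(sgnE n i)},
      ∀ y ∈ {v : Fin n → ℤ | ∃ i, v = sgnE n i ∨ v = -(sgnE n i)},
        ∃ w ∈ W, w x = y) :
    (W : Set ((Fin n → ℤ) ≃ₗ[ℤ] (Fin n → ℤ))) = {f | IsSignedPerm f} ∨
      (W : Set ((Fin n → ℤ) ≃ₗ[ℤ] (Fin n → ℤ))) = {f | IsSignedPermPos f} := by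
  have hlink : ∀ i j, Linked W i j :=
    linked_of_transitive hgen fun i j => htrans _ ⟨i, .inl rfl⟩ _ ⟨j, .inl rfl⟩
  let i₀ : Fin n := ⟨0, hn⟩
  obtain ⟨a, b, hab⟩ := exists_isFull hgen hlink (htrans _ ⟨i₀, .inl rfl⟩ _ ⟨i₀, .inr rfl⟩)
  have hpair : ∀ i j, i ≠ j → IsFull W i j := fun i j => hab.of_ne hlink
  by_cases ht : ∃ c, signedSwap c c (-1) ∈ W
  · obtain ⟨c, hc⟩ := ht
    exact .inl (Set.ext fun f => ⟨hsub f, mem_of_isSignedPerm hpair hc⟩)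
  · rw [not_exists] at ht
    exact .inr (Set.ext fun f =>
      ⟨fun hf => le_signedPermPos hgen ht hf, mem_of_isSignedPermPos hpair a⟩)
end

section
/- Let k be a field of characteristic 2 and G a finite group, and let G₂ = {g ∈ G : g² = 1}. The k-subspace of the group algebra k[G] consisting of the elements x with x* = x and t(x) = 0 has dimension (|G| + |G₂|)/2 − 1 over k. -/
/-! Hermitian elements are the functions `G → k` constant on the pairs `{g, g⁻¹}`, so they form a
space whose dimension is the number of such pairs. These pairs are the orbits of `ℤˣ` acting by
`g ↦ g ^ (±1)`, and Burnside's lemma for this action gives `|G| + |G₂| = 2 · #orbits`. The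
augmentation is a nonzero functional on the hermitian elements (`t 1 = 1`), so its kernel there
has codimension one. -/

/-- The canonical involution `x ↦ x*` of the group algebra `k[G]`, determined by
`g* = g⁻¹` for `g ∈ G`: the coefficient of `g` in `gStar x` is the coefficient
of `g⁻¹` in `x`. -/
noncomputable def gStar {k G : Type*} [Semiring k] [Group G] (x : MonoidAlgebra k G) :
    MonoidAlgebra k G := MonoidAlgebra.ofCoeff (Finsupp.equivMapDomain (Equiv.inv G) x.coeff)

lemma gStar_apply {k G : Type*} [Semiring k] [Group G] (x : MonoidAlgebra k G) (g : G) :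
    (gStar x).coeff g = x.coeff g⁻¹ := rfl

lemma ma_add_apply {k G : Type*} [Semiring k] (a b : MonoidAlgebra k G) (g : G) :
    (a + b).coeff g = a.coeff g + b.coeff g := rfl

lemma ma_smul_apply {k G : Type*} [Semiring k] (c : k) (a : MonoidAlgebra k G) (g : G) :
    (c • a).coeff g = c * a.coeff g := rfl

/-- The `k`-subspace of `k[G]` consisting of the hermitian elements (`x* = x`) with
zero augmentation (`t x = Σ_g x_g = 0`). -/
noncomputable def hermAugZero (k G : Type*) [Field k] [Group G] [Fintype G] :
    Submodule k (MonoidAlgebra k G) where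
  carrier := {x | gStar x = x ∧ ∑ g : G, x.coeff g = 0}
  add_mem' := by
    rintro a b ⟨ha1, ha2⟩ ⟨hb1, hb2⟩
    refine ⟨?_, ?_⟩
    · ext g
      have h1 := congrArg (fun y => y.coeff g) ha1
      have h2 := congrArg (fun y => y.coeff g) hb1
      simp only [gStar_apply] at h1 h2
      simp only [gStar_apply, ma_add_apply, h1, h2]
    · simp only [ma_add_apply, Finset.sum_add_distrib, ha2, hb2, add_zero]
  zero_mem' := by
    refine ⟨?_, by simp⟩
    ext g
    simp only [gStar_apply]
    rfl
  smul_mem' := by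
    rintro c a ⟨ha1, ha2⟩
    refine ⟨?_, ?_⟩
    · ext g
      have h1 := congrArg (fun y => y.coeff g) ha1
      simp only [gStar_apply] at h1
      simp only [gStar_apply, ma_smul_apply, h1]
    · simp only [ma_smul_apply, ← Finset.mul_sum, ha2, mul_zero]

open Module MulAction

/- Not a global instance: on `G = ℤˣ` it would clash with the action of `ℤˣ` on itself by
multiplication. -/
abbrev zpowUnitsAction (G : Type*) [Group G] : MulAction ℤˣ G where
  smul u g := g ^ (u : ℤ)
  one_smul := zpow_one
  mul_smul u v g := by
    change g ^ ((u * v : ℤˣ) : ℤ) = (g ^ (v : ℤ)) ^ (u : ℤ)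
    rw [← zpow_mul, Units.val_mul, mul_comm]

attribute [local instance] zpowUnitsAction

section zpowUnitsAction

variable {G : Type*} [Group G]

theorem zpowUnitsAction_neg_one_smul (g : G) : (-1 : ℤˣ) • g = g⁻¹ :=
  zpow_neg_one g

theorem zpowUnitsAction_invariant_iff {β : Type*} (f : G → β) :
    (∀ (u : ℤˣ) (g : G), f (u • g) = f g) ↔ ∀ g, f g⁻¹ = f g := by
  refine ⟨fun hf g => zpowUnitsAction_neg_one_smul g ▸ hf (-1) g, fun hf u g => ?_⟩
  rcases Int.units_eq_one_or u with rfl | rfl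
  · rw [one_smul]
  · rw [zpowUnitsAction_neg_one_smul, hf]

variable (G) in
theorem card_add_card_sq_eq_one [Fintype G] :
    Nat.card G + Nat.card {g : G // g ^ 2 = 1} = 2 * Nat.card (orbitRel.Quotient ℤˣ G) := by
  classical
  have burnside := sum_card_fixedBy_eq_card_orbits_mul_card_group ℤˣ G
  rw [UnitsInt.univ, Finset.sum_pair (by decide), Fintype.card_units_int] at burnside
  have fixedBy_one : Fintype.card (fixedBy G (1 : ℤˣ)) = Nat.card G := by
    rw [← Nat.card_eq_fintype_card]
    exact Nat.card_congr (Equiv.subtypeUnivEquiv fun g => one_smul ℤˣ g)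
  have fixedBy_neg_one :
      Fintype.card (fixedBy G (-1 : ℤˣ)) = Nat.card {g : G // g ^ 2 = 1} := by
    rw [← Nat.card_eq_fintype_card]
    refine Nat.card_congr (Equiv.subtypeEquivRight fun g => ?_)
    rw [mem_fixedBy, zpowUnitsAction_neg_one_smul, inv_eq_iff_mul_eq_one, ← sq]
  rw [← fixedBy_one, ← fixedBy_neg_one, burnside, Nat.card_eq_fintype_card, mul_comm]

end zpowUnitsAction

theorem Submodule.finrank_inf_ker_add_one {K V : Type*} [DivisionRing K] [AddCommGroup V]
    [Module K V] {W : Submodule K V} [FiniteDimensional K W] {f : V →ₗ[K] K} {w : V}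
    (hw : w ∈ W) (hfw : f w ≠ 0) : finrank K ↥(W ⊓ LinearMap.ker f) + 1 = finrank K W := by
  have hf : f.domRestrict W ≠ 0 := fun h => hfw (LinearMap.congr_fun h ⟨w, hw⟩)
  rw [← Dual.finrank_ker_add_one_of_ne_zero hf, LinearMap.ker_domRestrict,
    ← Submodule.map_comap_subtype,
    (Submodule.equivMapOfInjective _ W.injective_subtype _).finrank_eq.symm]

section orbitRel

variable (R H α : Type*) [Group H] [MulAction H α]

theorem mem_range_funLeft_mk_orbitRel_iff {M : Type*} [Semiring R] [AddCommMonoid M]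
    [Module R M] (f : α → M) :
    f ∈ LinearMap.range (LinearMap.funLeft R M (Quotient.mk (orbitRel H α))) ↔
      ∀ (h : H) (a : α), f (h • a) = f a := by
  constructor
  · rintro ⟨φ, rfl⟩ h a
    exact congrArg φ (Quotient.sound (mem_orbit a h))
  · intro hf
    refine ⟨Quotient.lift f ?_, rfl⟩
    rintro a b ⟨h, rfl⟩
    exact hf h b

theorem finrank_range_funLeft_mk_orbitRel [DivisionRing R] [Finite α] :
    finrank R (LinearMap.range (LinearMap.funLeft R R (Quotient.mk (orbitRel H α)))) =
      Nat.card (orbitRel.Quotient H α) := by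
  have : Fintype (orbitRel.Quotient H α) := Fintype.ofFinite _
  rw [Nat.card_eq_fintype_card, LinearMap.finrank_range_of_inj
    (LinearMap.funLeft_injective_of_surjective _ _ _ Quotient.mk_surjective),
    Module.finrank_fintype_fun_eq_card]

end orbitRel

namespace MonoidAlgebra

noncomputable def coeffFunLinearEquiv (k G : Type*) [Semiring k] [Finite G] :
    MonoidAlgebra k G ≃ₗ[k] (G → k) :=
  (coeffLinearEquiv k).trans (Finsupp.linearEquivFunOnFinite k k G)

variable (k G : Type*) [Field k] [Group G]

noncomputable def hermitian : Submodule k (MonoidAlgebra k G) where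
  carrier := {x | ∀ g, x.coeff g⁻¹ = x.coeff g}
  add_mem' ha hb g := by simp only [ma_add_apply, ha g, hb g]
  zero_mem' _ := rfl
  smul_mem' c _ ha g := by simp only [ma_smul_apply, ha g]

noncomputable def augmentation [Fintype G] : MonoidAlgebra k G →ₗ[k] k where
  toFun x := ∑ g, x.coeff g
  map_add' x y := by simp only [ma_add_apply, Finset.sum_add_distrib]
  map_smul' c x := by
    simp only [ma_smul_apply, ← Finset.mul_sum, RingHom.id_apply, smul_eq_mul]

variable {k G}

theorem gStar_eq_self_iff (x : MonoidAlgebra k G) : gStar x = x ↔ x ∈ hermitian k G :=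
  ⟨fun h g => congrArg (coeff · g) h, fun h => MonoidAlgebra.ext (Finsupp.ext h)⟩

theorem hermAugZero_eq_hermitian_inf_ker [Fintype G] :
    hermAugZero k G = hermitian k G ⊓ LinearMap.ker (augmentation k G) :=
  SetLike.ext fun x => and_congr_left' (gStar_eq_self_iff x)

theorem one_mem_hermitian : (1 : MonoidAlgebra k G) ∈ hermitian k G := by
  classical
  intro g
  simp only [one_def, coeff_single, Finsupp.single_apply, @eq_comm _ (1 : G), inv_eq_one]

theorem augmentation_one [Fintype G] : augmentation k G 1 = 1 := by
  simp [augmentation, one_def]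

theorem map_hermitian_eq_range_funLeft [Fintype G] :
    (hermitian k G).map (coeffFunLinearEquiv k G : MonoidAlgebra k G →ₗ[k] G → k) =
      LinearMap.range (LinearMap.funLeft k k (Quotient.mk (orbitRel ℤˣ G))) := by
  ext f
  rw [Submodule.mem_map_equiv, mem_range_funLeft_mk_orbitRel_iff, zpowUnitsAction_invariant_iff]
  rfl

variable (k G) in
theorem finrank_hermitian [Fintype G] :
    finrank k (hermitian k G) = Nat.card (orbitRel.Quotient ℤˣ G) := by
  rw [← LinearEquiv.finrank_map_eq (coeffFunLinearEquiv k G), map_hermitian_eq_range_funLeft,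
    finrank_range_funLeft_mk_orbitRel]

end MonoidAlgebra

theorem stmt_2_general (k G : Type*) [Field k] [Group G] [Fintype G] :
    Module.finrank k (hermAugZero k G) =
      (Nat.card G + Nat.card {g : G // g ^ 2 = 1}) / 2 - 1 := by
  have codim_one := Submodule.finrank_inf_ker_add_one (W := MonoidAlgebra.hermitian k G)
    (f := MonoidAlgebra.augmentation k G) MonoidAlgebra.one_mem_hermitian
    (by rw [MonoidAlgebra.augmentation_one]; exact one_ne_zero)
  rw [MonoidAlgebra.hermAugZero_eq_hermitian_inf_ker, card_add_card_sq_eq_one,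
    Nat.mul_div_cancel_left _ two_pos, ← MonoidAlgebra.finrank_hermitian k G, ← codim_one,
    Nat.add_sub_cancel]

/-- For a field `k` of characteristic 2 and a finite group `G`, the space of hermitian
elements of `k[G]` with zero augmentation has dimension `(|G| + |G₂|)/2 - 1`, where
`G₂ = {g : G | g² = 1}`. -/
theorem stmt_2 (k G : Type*) [Field k] [CharP k 2] [Group G] [Fintype G] :
    Module.finrank k (hermAugZero k G) =
      (Nat.card G + Nat.card {g : G // g ^ 2 = 1}) / 2 - 1 :=
  stmt_2_general k G
end

section
/- Let k be a field of characteristic 2, G a finite group, and ε : G → ℤ/2ℤ a homomorphism such that ε(g) = 0 for every g ∈ G with g² = 1. For every unitary element x = Σ_{g∈G} x_g·g of k[G] (i.e. x·x* = 1), set λ(x) = Σ_{g : ε(g)=0} x_g and μ(x) = Σ_{g : ε(g)=1} x_g. Then (λ(x), μ(x)) = (1, 0) or (λ(x), μ(x)) = (0, 1). -/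
open Finset MonoidAlgebra

section Parity

variable {G : Type*} [Group G] {ε : G → ZMod 2}

theorem parity_one (hhom : ∀ a b : G, ε (a * b) = ε a + ε b) : ε 1 = 0 := by
  simpa using hhom 1 1

theorem parity_inv (hhom : ∀ a b : G, ε (a * b) = ε a + ε b) (g : G) : ε g⁻¹ = ε g := by
  have h := hhom g g⁻¹
  rw [mul_inv_cancel, parity_one hhom, eq_comm, add_eq_zero_iff_eq_neg'] at h
  rw [h, ZMod.neg_eq_self_mod_two]

end Parity

theorem sum_even_add_sum_odd {M G : Type*} [AddCommMonoid M] [Fintype G] (ε : G → ZMod 2)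
    (f : G → M) :
    (∑ g ∈ univ.filter fun g => ε g = 0, f g) + (∑ g ∈ univ.filter fun g => ε g = 1, f g)
      = ∑ g, f g := by
  rw [← sum_filter_add_sum_filter_not univ fun g => ε g = 0]
  congr 2
  refine filter_congr fun g _ => ?_
  generalize ε g = e
  revert e
  decide

section GroupAlgebra

variable {k G : Type*} [Group G]

theorem coeff_gStar [Semiring k] (x : MonoidAlgebra k G) (g : G) :
    (gStar x).coeff g = x.coeff g⁻¹ := rfl

variable [Fintype G]

theorem coeff_mul_gStar [Semiring k] (x : MonoidAlgebra k G) (g : G) :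
    (x * gStar x).coeff g = ∑ a, x.coeff a * x.coeff (g⁻¹ * a) := by
  rw [coeff_mul_apply_left, Finsupp.sum_fintype _ _ fun _ => zero_mul _]
  simp [coeff_gStar]

theorem sum_coeff_one [Semiring k] : ∑ g, (1 : MonoidAlgebra k G).coeff g = 1 := by
  classical
  simp [one_def, coeff_single, Finsupp.single_apply]

theorem sum_coeff_mul_gStar [CommSemiring k] (x : MonoidAlgebra k G) :
    ∑ g, (x * gStar x).coeff g = (∑ g, x.coeff g) ^ 2 := by
  simp_rw [coeff_mul_gStar, sq, sum_mul_sum]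
  rw [sum_comm]
  refine sum_congr rfl fun a _ => ?_
  exact ((Equiv.inv G).trans (Equiv.mulRight a)).sum_comp (fun b => x.coeff a * x.coeff b)

theorem sum_coeff_eq_one_of_mul_gStar_eq_one [CommRing k] [NoZeroDivisors k] [CharP k 2]
    {x : MonoidAlgebra k G} (hx : x * gStar x = 1) : ∑ g, x.coeff g = 1 := by
  have h := sum_coeff_mul_gStar x
  rwa [hx, sum_coeff_one, eq_comm, sq_eq_one_iff, CharTwo.neg_eq, or_self] at h

end GroupAlgebra

section EvenCorrelation

variable {k G : Type*} [CommSemiring k] [Group G] [Fintype G] {ε : G → ZMod 2}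

noncomputable def evenCorrelation (ε : G → ZMod 2) (x : MonoidAlgebra k G) (h : G) : k :=
  ∑ a ∈ univ.filter fun a => ε a = 0, x.coeff a * x.coeff (h⁻¹ * a)

theorem coeff_mul_gStar_eq_evenCorrelation_add (hhom : ∀ a b : G, ε (a * b) = ε a + ε b)
    (x : MonoidAlgebra k G) {h : G} (hh : ε h = 1) :
    (x * gStar x).coeff h = evenCorrelation ε x h + evenCorrelation ε x h⁻¹ := by
  classical
  have hodd : ∀ b : G, ε (h * b) ≠ 0 ↔ ε b = 0 := fun b => by
    rw [hhom, hh]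
    generalize ε b = e
    revert e
    decide
  rw [coeff_mul_gStar, ← sum_filter_add_sum_filter_not univ fun a => ε a = 0]
  congr 1
  rw [sum_filter, ← Equiv.sum_comp (Equiv.mulLeft h), evenCorrelation, sum_filter]
  refine sum_congr rfl fun b _ => ?_
  simp [hodd, mul_comm]

theorem sum_even_mul_sum_odd (hhom : ∀ a b : G, ε (a * b) = ε a + ε b) (x : MonoidAlgebra k G) :
    (∑ g ∈ univ.filter fun g => ε g = 0, x.coeff g) *
        (∑ g ∈ univ.filter fun g => ε g = 1, x.coeff g)
      = ∑ h ∈ univ.filter fun h => ε h = 1, evenCorrelation ε x h := by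
  simp_rw [evenCorrelation, sum_mul_sum]
  rw [eq_comm, sum_comm]
  refine sum_congr rfl fun a ha => ?_
  have hodd : ∀ h : G, ε (h⁻¹ * a) = ε h := fun h => by
    rw [hhom, parity_inv hhom, (mem_filter.mp ha).2, add_zero]
  rw [sum_filter, sum_filter]
  exact Fintype.sum_equiv ((Equiv.inv G).trans (Equiv.mulRight a)) _ _ fun h => by simp [hodd]

theorem sum_even_mul_sum_odd_eq_zero (hhom : ∀ a b : G, ε (a * b) = ε a + ε b)
    (hess : ∀ g : G, g ^ 2 = 1 → ε g = 0) {x : MonoidAlgebra k G} (hx : x * gStar x = 1) :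
    (∑ g ∈ univ.filter fun g => ε g = 0, x.coeff g) *
        (∑ g ∈ univ.filter fun g => ε g = 1, x.coeff g) = 0 := by
  classical
  rw [sum_even_mul_sum_odd hhom]
  refine sum_involution (fun h _ => h⁻¹) (fun h hh => ?_) (fun h hh _ hinv => ?_)
    (fun h hh => by simpa [parity_inv hhom] using hh) (fun h _ => inv_inv h)
  · have hh1 : h ≠ 1 := by
      rintro rfl
      simp [parity_one hhom] at hh
    rw [← coeff_mul_gStar_eq_evenCorrelation_add hhom x (mem_filter.mp hh).2, hx]
    simp [one_def, coeff_single, Ne.symm hh1]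
  · have hsq : h ^ 2 = 1 := by
      rw [sq]
      nth_rw 2 [← hinv]
      exact mul_inv_cancel h
    simp [hess h hsq] at hh

end EvenCorrelation

/-- Let `k` be a field of characteristic 2, `G` a finite group, `ε : G → ℤ/2ℤ` a
homomorphism vanishing on all `g` with `g² = 1` (an essential character). For every
unitary `x ∈ k[G]` (i.e. `x·x* = 1`), the sums `λ(x) = Σ_{ε(g)=0} x_g` and
`μ(x) = Σ_{ε(g)=1} x_g` satisfy `(λ(x), μ(x)) = (1,0)` or `(0,1)`. -/
theorem stmt_3 (k G : Type*) [Field k] [CharP k 2] [Group G] [Fintype G]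
    (ε : G → ZMod 2) (hhom : ∀ a b : G, ε (a * b) = ε a + ε b)
    (hess : ∀ g : G, g ^ 2 = 1 → ε g = 0)
    (x : MonoidAlgebra k G) (hx : x * gStar x = 1) :
    ((∑ g ∈ Finset.univ.filter fun g => ε g = 0, x.coeff g) = 1 ∧
        (∑ g ∈ Finset.univ.filter fun g => ε g = 1, x.coeff g) = 0) ∨
      ((∑ g ∈ Finset.univ.filter fun g => ε g = 0, x.coeff g) = 0 ∧
        (∑ g ∈ Finset.univ.filter fun g => ε g = 1, x.coeff g) = 1) := by
  have hsum := sum_even_add_sum_odd ε x.coeff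
  rw [sum_coeff_eq_one_of_mul_gStar_eq_one hx] at hsum
  rcases mul_eq_zero.mp (sum_even_mul_sum_odd_eq_zero hhom hess hx) with h0 | h0
  · exact Or.inr ⟨h0, by rwa [h0, zero_add] at hsum⟩
  · exact Or.inl ⟨by rwa [h0, add_zero] at hsum, h0⟩
end

section
/- Let K be a field of characteristic 2 and let X, Y, Z, T ∈ K satisfy X + Y + Z + T = 1, XY = ZT, XZ = YT and XT = YZ. Then three of the elements X, Y, Z, T are equal to 0 and the fourth is equal to 1. -/
private lemma aux6 {K : Type*} [Field K] (X Y Z T : K) (two : (2:K) = 0)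
    (h1 : X + Y + Z + T = 1) (h2 : X * Y = Z * T) (e1 : X = Y) (e2 : X = Z) :
    X = 0 ∧ Y = 0 ∧ Z = 0 ∧ T = 1 := by
  have hS : X + T = 1 := by linear_combination h1 + e1 + e2 - X * two
  have hprod : X * (X + T) = 0 := by
    linear_combination h2 + X * e1 + T * e2 + Z * T * two
  rw [hS, mul_one] at hprod
  refine ⟨hprod, ?_, ?_, ?_⟩
  · linear_combination hprod - e1
  · linear_combination hprod - e2
  · linear_combination hS - hprod

private lemma aux6' {K : Type*} [Field K] (X Y Z T : K) (two : (2:K) = 0)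
    (h1 : X + Y + Z + T = 1) (e1 : X = Y) (e2 : X = Z) (e3 : X = T) : False := by
  have : (0:K) = 1 := by linear_combination h1 + e1 + e2 + e3 - 2 * X * two
  exact zero_ne_one this

/-- Let `K` be a field of characteristic 2 and `X, Y, Z, T ∈ K` with
`X + Y + Z + T = 1`, `XY = ZT`, `XZ = YT` and `XT = YZ`. Then three of the four
elements are `0` and the remaining one is `1`. -/
theorem stmt_6 (K : Type*) [Field K] [CharP K 2] (X Y Z T : K)
    (h1 : X + Y + Z + T = 1) (h2 : X * Y = Z * T) (h3 : X * Z = Y * T)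
    (h4 : X * T = Y * Z) :
    (X = 1 ∧ Y = 0 ∧ Z = 0 ∧ T = 0) ∨ (X = 0 ∧ Y = 1 ∧ Z = 0 ∧ T = 0) ∨
      (X = 0 ∧ Y = 0 ∧ Z = 1 ∧ T = 0) ∨ (X = 0 ∧ Y = 0 ∧ Z = 0 ∧ T = 1) := by
  have two : (2:K) = 0 := by
    have := CharP.cast_eq_zero K 2
    simpa using this
  have p1 : (X + Y) * (Z + T) = 0 := by
    linear_combination h3 + h4 + (Y * Z + Y * T) * two
  have p2 : (X + Z) * (Y + T) = 0 := by
    linear_combination h2 + h4 + (Z * T + Z * Y) * two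
  have p3 : (X + T) * (Y + Z) = 0 := by
    linear_combination h2 + h3 + (T * Z + T * Y) * two
  have eq_of : ∀ a b : K, a + b = 0 → a = b := fun a b h => by
    linear_combination h - b * two
  have d1 : X = Y ∨ Z = T := (mul_eq_zero.1 p1).imp (eq_of _ _) (eq_of _ _)
  have d2 : X = Z ∨ Y = T := (mul_eq_zero.1 p2).imp (eq_of _ _) (eq_of _ _)
  have d3 : X = T ∨ Y = Z := (mul_eq_zero.1 p3).imp (eq_of _ _) (eq_of _ _)
  rcases d1 with e1 | e1 <;> rcases d2 with e2 | e2 <;> rcases d3 with e3 | e3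
  · exact absurd (aux6' X Y Z T two h1 e1 e2 e3) id
  · -- X=Y, X=Z, Y=Z : T = 1
    obtain ⟨a, b, c, d⟩ := aux6 X Y Z T two h1 h2 e1 e2
    exact Or.inr (Or.inr (Or.inr ⟨a, b, c, d⟩))
  · -- X=Y, Y=T, X=T : Z = 1
    obtain ⟨a, b, c, d⟩ := aux6 X Y T Z two (by linear_combination h1)
      (by linear_combination h2) e1 e3
    exact Or.inr (Or.inr (Or.inl ⟨a, b, d, c⟩))
  · exact absurd (aux6' X Y Z T two h1 e1 (e1.trans e3) (e1.trans e2)) id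
  · -- Z=T, X=Z, X=T : Y = 1
    obtain ⟨a, b, c, d⟩ := aux6 X Z T Y two (by linear_combination h1)
      (by linear_combination h3) e2 e3
    exact Or.inr (Or.inl ⟨a, d, b, c⟩)
  · -- Z=T, X=Z, Y=Z : all equal, contradiction
    exact absurd (aux6' X Y Z T two h1 (e2.trans e3.symm) e2 (e2.trans e1)) id
  · -- Z=T, Y=T, X=T : all equal, contradiction
    exact absurd (aux6' X Y Z T two h1 (e3.trans e2.symm) (e3.trans e1.symm) e3) id
  · -- Z=T, Y=T, Y=Z : X = 1
    obtain ⟨a, b, c, d⟩ := aux6 Y Z T X two (by linear_combination h1)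
      (by linear_combination -h4) e3 e2
    exact Or.inl ⟨d, a, b, c⟩
end

section
/- Let k be a field of characteristic 2, let n = 2^m with m ≥ 2, and let A = k[X]/(Xⁿ). Let * denote the unique k-algebra involution of A with X* = X·(1 + X)⁻¹ (equivalently (1+X)* = (1+X)⁻¹; note 1 + X is a unit of A). Then every x ∈ A with x·x* = 1 and x − 1 ∈ (X²) can be written x = y⁻¹·y*·z where y is a unit of A and z − 1 ∈ (X^{n−2}). -/
/-- The truncated polynomial algebra `A = k[X]/(Xⁿ)`. -/
abbrev TruncPoly (k : Type*) [Field k] (n : ℕ) : Type _ :=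
  Polynomial k ⧸ Ideal.span {(Polynomial.X : Polynomial k) ^ n}

/-- The image of `X` in `k[X]/(Xⁿ)`. -/
noncomputable def truncX (k : Type*) [Field k] (n : ℕ) : TruncPoly k n :=
  Ideal.Quotient.mk _ (Polynomial.X : Polynomial k)

section Aux

variable {k : Type*} [Field k] {n : ℕ}

lemma trunc_mk_eq_aeval (p : Polynomial k) :
    Ideal.Quotient.mk (Ideal.span {(Polynomial.X : Polynomial k) ^ n}) p
      = Polynomial.aeval (truncX k n) p := by
  have h : (Ideal.Quotient.mkₐ k (Ideal.span {(Polynomial.X : Polynomial k) ^ n}))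
      = Polynomial.aeval (truncX k n) := by
    apply Polynomial.algHom_ext
    simp [truncX, Ideal.Quotient.mkₐ_eq_mk]
  calc Ideal.Quotient.mk (Ideal.span {(Polynomial.X : Polynomial k) ^ n}) p
      = Ideal.Quotient.mkₐ k (Ideal.span {(Polynomial.X : Polynomial k) ^ n}) p := by
        rw [Ideal.Quotient.mkₐ_eq_mk]
    _ = Polynomial.aeval (truncX k n) p := by rw [h]

lemma trunc_surj (t : TruncPoly k n) :
    ∃ p : Polynomial k, Polynomial.aeval (truncX k n) p = t := by
  obtain ⟨p, hp⟩ := Ideal.Quotient.mk_surjective t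
  exact ⟨p, by rw [← trunc_mk_eq_aeval]; exact hp⟩

lemma trunc_cancel (j a : ℕ) (hna : n = j + 2 + a) (t : TruncPoly k n)
    (h : truncX k n ^ (j + 2) ∣ truncX k n ^ (j + 1) * t) :
    truncX k n ^ (j + 1) ∣ truncX k n ^ j * t := by
  obtain ⟨u, hu⟩ := h
  obtain ⟨T, rfl⟩ := Ideal.Quotient.mk_surjective t
  obtain ⟨U, rfl⟩ := Ideal.Quotient.mk_surjective u
  have hmem : (Polynomial.X : Polynomial k) ^ (j + 1) * T - Polynomial.X ^ (j + 2) * U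
      ∈ Ideal.span {(Polynomial.X : Polynomial k) ^ n} := by
    rw [← Ideal.Quotient.eq_zero_iff_mem]
    have h0 : truncX k n ^ (j + 1) * Ideal.Quotient.mk _ T
        - truncX k n ^ (j + 2) * Ideal.Quotient.mk _ U = 0 := by rw [hu]; ring
    simpa [truncX, map_sub, map_mul, map_pow] using h0
  obtain ⟨R, hR⟩ := Ideal.mem_span_singleton.mp hmem
  have key : T = Polynomial.X * U + Polynomial.X ^ (a + 1) * R := by
    have hX : (Polynomial.X : Polynomial k) ^ (j + 1) ≠ 0 :=
      pow_ne_zero _ Polynomial.X_ne_zero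
    apply mul_left_cancel₀ hX
    have hpow : (Polynomial.X : Polynomial k) ^ n
        = Polynomial.X ^ (j + 1) * Polynomial.X ^ (a + 1) := by
      rw [← pow_add]; congr 1; omega
    linear_combination hR + R * hpow
  have hp : (Polynomial.X : Polynomial k) ^ j * T
      = Polynomial.X ^ (j + 1) * (U + Polynomial.X ^ a * R) := by
    rw [key]; ring
  refine ⟨Ideal.Quotient.mk _ U + truncX k n ^ a * Ideal.Quotient.mk _ R, ?_⟩
  have h2 := congrArg (Ideal.Quotient.mk (Ideal.span {(Polynomial.X : Polynomial k) ^ n})) hp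
  simpa [truncX, map_mul, map_add, map_pow] using h2

lemma even_id {A : Type*} [CommRing A] (ξ E t s g : A) (c : ℕ)
    (hE2 : E * (1 + ξ) = 1 + ξ ^ 2 * g ^ 2) :
    (1 + ξ ^ (2 * c + 1) * (E * (t + ξ ^ 2 * s))) * (1 + ξ ^ (2 * c + 2) * t)
      = (1 + ξ ^ (2 * c + 1) * t)
        + ξ ^ (2 * c + 3) * (E * s + g ^ 2 * t + t * E - ξ * t * g ^ 2
            + ξ ^ (2 * c) * (E * (t + ξ ^ 2 * s)) * t) := by
  linear_combination (ξ ^ (2 * c + 1) * t - ξ ^ (2 * c + 2) * t) * hE2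

end Aux

set_option maxHeartbeats 4000000 in
/-- Let `k` be a field of characteristic 2, `n = 2 ^ m` with `m ≥ 2`, `A = k[X]/(Xⁿ)`, and
let `σ` be the (unique) `k`-algebra involution of `A` with `X* = X·(1+X)⁻¹`, i.e. with
`σ(X)·(1+X) = X`. Then every unitary `x` (i.e. `x·x* = 1`) with `x - 1 ∈ (X²)` can be
written `x = y⁻¹·y*·z` with `y` a unit of `A` and `z - 1 ∈ (X^(n-2))`. -/
theorem stmt_9 (k : Type*) [Field k] [CharP k 2] (m n : ℕ) (hm : 2 ≤ m) (hn : n = 2 ^ m)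
    (σ : TruncPoly k n →ₐ[k] TruncPoly k n)
    (hσ : σ (truncX k n) * (1 + truncX k n) = truncX k n)
    (x : TruncPoly k n) (hx : x * σ x = 1)
    (hx1 : x - 1 ∈ Ideal.span {truncX k n ^ 2}) :
    ∃ (y : (TruncPoly k n)ˣ) (z : TruncPoly k n),
      z - 1 ∈ Ideal.span {truncX k n ^ (n - 2)} ∧
        x = (↑y⁻¹ : TruncPoly k n) * σ ↑y * z := by
  have hn4 : 4 ≤ n := by
    subst hn
    calc 4 = 2 ^ 2 := by norm_num
      _ ≤ 2 ^ m := Nat.pow_le_pow_right (by norm_num) hm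
  obtain ⟨ξ, hξ⟩ : ∃ ξ', ξ' = truncX k n := ⟨_, rfl⟩
  rw [← hξ] at hσ hx1 ⊢
  have h2A : (2 : TruncPoly k n) = 0 := by
    have h2k : (2 : k) = 0 := by
      have := CharP.cast_eq_zero k 2
      simpa using this
    calc (2 : TruncPoly k n) = algebraMap k (TruncPoly k n) 2 := (map_ofNat _ 2).symm
      _ = 0 := by rw [h2k, map_zero]
  have hξn : ξ ^ n = 0 := by
    have h0 : ξ ^ n = Ideal.Quotient.mk _ ((Polynomial.X : Polynomial k) ^ n) := by
      rw [hξ]; simp only [truncX, map_pow]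
    rw [h0, Ideal.Quotient.eq_zero_iff_mem]
    exact Ideal.subset_span rfl
  have hunit1 : ∀ (c : ℕ) (t : TruncPoly k n), IsUnit (1 + ξ ^ (c + 1) * t) := by
    intro c t
    refine IsNilpotent.isUnit_one_add ⟨n, ?_⟩
    rw [mul_pow, ← pow_mul]
    have h1 : ξ ^ ((c + 1) * n) = 0 := by
      have h2 : (c + 1) * n = n + c * n := by ring
      rw [h2, pow_add, hξn, zero_mul]
    rw [h1, zero_mul]
  have huξ : IsUnit (1 + ξ) := by simpa using hunit1 0 1
  obtain ⟨e, he⟩ := huξ.exists_left_inv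
  have hσξ : σ ξ = ξ * e := by
    calc σ ξ = (σ ξ * (1 + ξ)) * e := by
          rw [mul_assoc, mul_comm (1 + ξ) e, he, mul_one]
      _ = ξ * e := by rw [hσ]
  have he2 : e = 1 + ξ * e := by linear_combination -he + (e - 1) * h2A
  have hσsub : ∀ t : TruncPoly k n, ξ ^ 2 ∣ σ t - t := by
    intro t
    obtain ⟨p, hp⟩ := trunc_surj t
    rw [← hξ] at hp
    subst hp
    have h1 : σ (Polynomial.aeval ξ p) = Polynomial.aeval (σ ξ) p :=
      (Polynomial.aeval_algHom_apply σ ξ p).symm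
    have h2 : (σ ξ - ξ) ∣ Polynomial.aeval (σ ξ) p - Polynomial.aeval ξ p := by
      have h3 := Polynomial.sub_dvd_eval_sub (σ ξ) ξ
        (p.map (algebraMap k (TruncPoly k n)))
      simpa [Polynomial.eval_map, ← Polynomial.aeval_def] using h3
    have h4 : ξ ^ 2 ∣ σ ξ - ξ := ⟨-e, by linear_combination hσξ + ξ * he⟩
    rw [h1]
    exact h4.trans h2
  have hσe : σ e * e = 1 := by
    have h1 := congrArg σ he
    rw [map_mul, map_add, map_one, hσξ] at h1
    rw [← he2] at h1
    exact h1
  have hσσξ : σ (σ ξ) = ξ := by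
    rw [hσξ, map_mul, hσξ]
    linear_combination ξ * hσe
  have hinv : ∀ t : TruncPoly k n, σ (σ t) = t := by
    intro t
    obtain ⟨p, hp⟩ := trunc_surj t
    rw [← hξ] at hp
    subst hp
    rw [← Polynomial.aeval_algHom_apply, ← Polynomial.aeval_algHom_apply, hσσξ]
  have unit_w : ∀ Y : (TruncPoly k n)ˣ,
      ((↑Y⁻¹ : TruncPoly k n) * σ ↑Y * x) * σ ((↑Y⁻¹ : TruncPoly k n) * σ ↑Y * x) = 1 := by
    intro Y
    have e1 : (↑Y⁻¹ : TruncPoly k n) * ↑Y = 1 := Units.inv_mul Y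
    have e2 : σ (↑Y⁻¹ : TruncPoly k n) * σ ↑Y = 1 := by rw [← map_mul, e1, map_one]
    rw [map_mul, map_mul, hinv]
    linear_combination (σ (↑Y⁻¹ : TruncPoly k n) * σ (↑Y : TruncPoly k n) * (x * σ x)) * e1
      + (x * σ x) * e2 + hx
  have hec : ∀ c : ℕ, ∃ g, e ^ c = 1 + ξ * g := by
    intro c
    have h1 : (e - 1) ∣ e ^ c - 1 := by
      simpa using sub_dvd_pow_sub_pow e 1 c
    have h2 : ξ ∣ e - 1 := ⟨e, by linear_combination he2⟩
    obtain ⟨g, hg⟩ := h2.trans h1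
    exact ⟨g, by linear_combination hg⟩
  have main : ∀ j : ℕ, j + 4 ≤ n →
      ∃ y : (TruncPoly k n)ˣ, ξ ^ (j + 2) ∣ ((↑y⁻¹ : TruncPoly k n) * σ ↑y * x) - 1 := by
    intro j
    induction j with
    | zero =>
      intro _
      refine ⟨1, ?_⟩
      simpa using Ideal.mem_span_singleton.mp hx1
    | succ j ih =>
      intro hj
      obtain ⟨y, hwd⟩ := ih (by omega)
      obtain ⟨t, ht⟩ := hwd
      obtain ⟨s, hs⟩ := hσsub t
      have hσt : σ t = t + ξ ^ 2 * s := by linear_combination hs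
      rcases Nat.even_or_odd j with ⟨c, hc⟩ | ⟨c, hc⟩
      · -- even case : j = 2c
        have ht' : ((↑y⁻¹ : TruncPoly k n) * σ ↑y * x) - 1 = ξ ^ (2 * c + 2) * t := by
          rw [show 2 * c + 2 = j + 2 by omega]; exact ht
        obtain ⟨g, hg⟩ := hec c
        have hE2 : e ^ (2 * c + 1) * (1 + ξ) = 1 + ξ ^ 2 * g ^ 2 := by
          calc e ^ (2 * c + 1) * (1 + ξ) = (e ^ c) ^ 2 * (e * (1 + ξ)) := by ring
            _ = (1 + ξ * g) ^ 2 * 1 := by rw [hg, he]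
            _ = 1 + ξ ^ 2 * g ^ 2 := by linear_combination (ξ * g) * h2A
        have hyu : IsUnit (1 + ξ ^ (2 * c + 1) * t) := hunit1 (2 * c) t
        have hu_spec : (↑hyu.unit : TruncPoly k n) = 1 + ξ ^ (2 * c + 1) * t := hyu.unit_spec
        have hσy' : σ (↑hyu.unit : TruncPoly k n)
            = 1 + ξ ^ (2 * c + 1) * (e ^ (2 * c + 1) * (t + ξ ^ 2 * s)) := by
          rw [hu_spec, map_add, map_one, map_mul, map_pow, hσξ, hσt, mul_pow]
          ring
        have huinv : (↑hyu.unit⁻¹ : TruncPoly k n) * ↑hyu.unit = 1 := Units.inv_mul _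
        refine ⟨y * hyu.unit, ?_⟩
        have hw' : (↑(y * hyu.unit)⁻¹ : TruncPoly k n) * σ ↑(y * hyu.unit) * x
            = ↑hyu.unit⁻¹ * (σ ↑hyu.unit * ((↑y⁻¹ : TruncPoly k n) * σ ↑y * x)) := by
          rw [mul_inv_rev, Units.val_mul, Units.val_mul, map_mul]
          ring
        have hprod : σ (↑hyu.unit : TruncPoly k n) * ((↑y⁻¹ : TruncPoly k n) * σ ↑y * x)
            = ↑hyu.unit + ξ ^ (2 * c + 3) * (e ^ (2 * c + 1) * s + g ^ 2 * t
                + t * e ^ (2 * c + 1) - ξ * t * g ^ 2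
                + ξ ^ (2 * c) * (e ^ (2 * c + 1) * (t + ξ ^ 2 * s)) * t) := by
          have hw1 : ((↑y⁻¹ : TruncPoly k n) * σ ↑y * x) = 1 + ξ ^ (2 * c + 2) * t := by
            linear_combination ht'
          rw [hσy', hw1, hu_spec]
          exact even_id ξ (e ^ (2 * c + 1)) t s g c hE2
        rw [show j + 1 + 2 = 2 * c + 3 by omega]
        refine ⟨(↑hyu.unit⁻¹ : TruncPoly k n) * (e ^ (2 * c + 1) * s + g ^ 2 * t
          + t * e ^ (2 * c + 1) - ξ * t * g ^ 2
          + ξ ^ (2 * c) * (e ^ (2 * c + 1) * (t + ξ ^ 2 * s)) * t), ?_⟩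
        linear_combination hw' + (↑hyu.unit⁻¹ : TruncPoly k n) * hprod + huinv
      · -- odd case : j = 2c+1
        refine ⟨y, ?_⟩
        have ht' : ((↑y⁻¹ : TruncPoly k n) * σ ↑y * x) - 1 = ξ ^ (2 * c + 3) * t := by
          rw [show 2 * c + 3 = j + 2 by omega]; exact ht
        have hw1 : ((↑y⁻¹ : TruncPoly k n) * σ ↑y * x) = 1 + ξ ^ (2 * c + 3) * t := by
          linear_combination ht'
        have hσw : σ ((↑y⁻¹ : TruncPoly k n) * σ ↑y * x)
            = 1 + ξ ^ (2 * c + 3) * (e ^ (2 * c + 3) * (t + ξ ^ 2 * s)) := by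
          rw [hw1, map_add, map_one, map_mul, map_pow, hσξ, hσt, mul_pow]
          ring
        have R1 : (1 + ξ ^ (2 * c + 3) * t)
            * (1 + ξ ^ (2 * c + 3) * (e ^ (2 * c + 3) * (t + ξ ^ 2 * s))) = 1 := by
          rw [← hw1, ← hσw]; exact unit_w y
        obtain ⟨g, hg⟩ := hec (c + 1)
        have hE2 : e ^ (2 * c + 3) * (1 + ξ) = 1 + ξ ^ 2 * g ^ 2 := by
          calc e ^ (2 * c + 3) * (1 + ξ) = (e ^ (c + 1)) ^ 2 * (e * (1 + ξ)) := by ring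
            _ = (1 + ξ * g) ^ 2 * 1 := by rw [hg, he]
            _ = 1 + ξ ^ 2 * g ^ 2 := by linear_combination (ξ * g) * h2A
        have hkey : ξ ^ (2 * c + 4) * (t * e ^ (2 * c + 3))
            = ξ ^ (2 * c + 5) * (t * g ^ 2 + e ^ (2 * c + 3) * s
                + ξ ^ (2 * c + 1) * (e ^ (2 * c + 3) * t * (t + ξ ^ 2 * s))) := by
          linear_combination (-1 : TruncPoly k n) * R1 + (ξ ^ (2 * c + 3) * t) * hE2
            + (ξ ^ (2 * c + 3) * t) * h2A
        have hEunit : e ^ (2 * c + 3) * (1 + ξ) ^ (2 * c + 3) = 1 := by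
          rw [← mul_pow, he, one_pow]
        have hdvd1 : ξ ^ (2 * c + 5) ∣ ξ ^ (2 * c + 4) * t :=
          ⟨(t * g ^ 2 + e ^ (2 * c + 3) * s
              + ξ ^ (2 * c + 1) * (e ^ (2 * c + 3) * t * (t + ξ ^ 2 * s)))
              * (1 + ξ) ^ (2 * c + 3), by
            linear_combination ((1 + ξ) ^ (2 * c + 3)) * hkey
              - (ξ ^ (2 * c + 4) * t) * hEunit⟩
        have hcan := trunc_cancel (n := n) (2 * c + 3) (n - (2 * c + 5)) (by omega) t ?_
        · rw [← hξ] at hcan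
          rw [show j + 1 + 2 = 2 * c + 4 by omega, ht']
          have h5 : (2 : ℕ) * c + 3 + 1 = 2 * c + 4 := by omega
          rw [h5] at hcan
          exact hcan
        · have h6 : (2 : ℕ) * c + 3 + 2 = 2 * c + 5 := by omega
          have h7 : (2 : ℕ) * c + 3 + 1 = 2 * c + 4 := by omega
          rw [h6, h7, ← hξ]
          exact hdvd1
  obtain ⟨y, hwd⟩ := main (n - 4) (by omega)
  rw [show n - 4 + 2 = n - 2 by omega] at hwd
  refine ⟨y⁻¹, (↑y⁻¹ : TruncPoly k n) * σ ↑y * x, Ideal.mem_span_singleton.mpr hwd, ?_⟩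
  have e1 : (↑y : TruncPoly k n) * ↑y⁻¹ = 1 := Units.mul_inv y
  have e2 : σ (↑y⁻¹ : TruncPoly k n) * σ ↑y = 1 := by
    rw [← map_mul, Units.inv_mul, map_one]
  rw [inv_inv]
  linear_combination (-(x * (σ (↑y⁻¹ : TruncPoly k n) * σ (↑y : TruncPoly k n)))) * e1 - x * e2
end

section
/- Let k be a field of characteristic 2, G a finite group, and L, L' two G-Galois algebras over k. Let k' be a purely inseparable field extension of k. If there exists a k'-linear bijection θ : k' ⊗ₖ L → k' ⊗ₖ L' commuting with the G-actions (θ((1⊗g) • u) = (1⊗g) • θ(u) for all g ∈ G) and carrying the base change to k' of the G-trace form q_L to the base change of q_{L'}, then the G-trace forms q_L and q_{L'} are already isomorphic over k. -/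
/-!
Fix a normal basis generator `v` of `L` and put `U := θ (1 ⊗ v)`. Since `θ` is `G`-equivariant
and an isometry, the `G`-orbits of `1 ⊗ v` and of `U` have the same trace-form Gram matrix over
`k'`. As `k'/k` is purely inseparable, `U ^ 2 ^ n = 1 ⊗ u` for some `n` and some `u ∈ L'`. In
characteristic 2 the trace commutes with squaring (`tr (M * M) = (tr M) ^ 2` for matrices), so
the Frobenius `x ↦ x ^ 2 ^ n` raises Gram matrices of trace forms to the `2 ^ n`-th power
entrywise. Hence the orbits of `v ^ 2 ^ n` in `L` and of `u` in `L'` have the same Gram matrix,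
now over `k`; that of `v ^ 2 ^ n` is invertible, so it is again a normal basis generator, and
`g • v ^ 2 ^ n ↦ g • u` is the required equivariant isometry.
-/

open TensorProduct

/-- A `G`-Galois algebra over `k`: a commutative `k`-algebra with an action of `G` by
`k`-algebra automorphisms, whose trace form is nondegenerate (étale), and admitting a
normal basis, i.e. an element `v` whose `G`-orbit `(g • v)_{g ∈ G}` is a `k`-basis. -/
def IsGaloisAlgebra (k G L : Type*) [Field k] [Group G] [Fintype G] [CommRing L]
    [Algebra k L] [MulSemiringAction G L] [SMulCommClass G k L] : Prop :=
  LinearMap.BilinForm.Nondegenerate (Algebra.traceForm k L) ∧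
    ∃ v : L, LinearIndependent k (fun g : G => g • v) ∧
      Submodule.span k (Set.range fun g : G => g • v) = ⊤

namespace CharTwo

variable {R ι : Type*} [CommRing R] [CharP R 2] [Fintype ι]

theorem sum_sum_eq_sum_diag_of_symm (f : ι → ι → R) (hf : ∀ i j, f i j = f j i) :
    ∑ i, ∑ j, f i j = ∑ i, f i i := by
  classical
  have hoffDiag : ∑ p ∈ Finset.univ.offDiag, f p.1 p.2 = 0 := by
    refine Finset.sum_involution (fun p _ => p.swap) (fun p _ => ?_) (fun p hp _ => ?_)
      (fun p hp => by simpa [eq_comm] using hp) (fun p _ => p.swap_swap)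
    · rw [Prod.fst_swap, Prod.snd_swap, hf, CharTwo.add_self_eq_zero]
    · simp only [Finset.mem_offDiag] at hp
      exact fun h => hp.2.2 (congrArg Prod.snd h)
  rw [← Fintype.sum_prod_type', ← Finset.univ_product_univ, ← Finset.diag_union_offDiag,
    Finset.sum_union (Finset.disjoint_diag_offDiag _), Finset.sum_diag, hoffDiag, add_zero]

end CharTwo

theorem Matrix.trace_mul_self_of_charTwo {ι R : Type*} [Fintype ι] [CommRing R] [CharP R 2]
    (M : Matrix ι ι R) : (M * M).trace = M.trace ^ 2 := by
  rw [Matrix.trace, Matrix.trace, CharTwo.sum_sq]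
  simp only [Matrix.diag_apply, Matrix.mul_apply]
  rw [CharTwo.sum_sum_eq_sum_diag_of_symm _ fun i j => mul_comm _ _]
  simp only [sq]

namespace Algebra

section CharTwo

variable {R S : Type*} [CommRing R] [CharP R 2] [CommRing S] [Algebra R S]
  [Module.Free R S] [Module.Finite R S]

theorem trace_sq_of_charTwo (x : S) : trace R S (x ^ 2) = trace R S x ^ 2 := by
  let b := Module.Free.chooseBasis R S
  rw [trace_eq_matrix_trace b, trace_eq_matrix_trace b, sq, map_mul,
    Matrix.trace_mul_self_of_charTwo]

theorem trace_pow_two_pow_of_charTwo (x : S) (n : ℕ) :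
    trace R S (x ^ 2 ^ n) = trace R S x ^ 2 ^ n := by
  induction n with
  | zero => simp
  | succ n ih => rw [pow_succ, pow_mul, trace_sq_of_charTwo, ih, ← pow_mul]

theorem traceForm_pow_two_pow_of_charTwo (x y : S) (n : ℕ) :
    traceForm R S (x ^ 2 ^ n) (y ^ 2 ^ n) = traceForm R S x y ^ 2 ^ n := by
  rw [traceForm_apply, traceForm_apply, ← mul_pow, trace_pow_two_pow_of_charTwo]

theorem traceMatrix_pow_two_pow_of_charTwo {ι : Type*} (b : ι → S) (n : ℕ) :
    traceMatrix R (fun i => b i ^ 2 ^ n) = (traceMatrix R b).map (iterateFrobenius R 2 n) := by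
  ext i j
  rw [traceMatrix_apply, Matrix.map_apply, traceMatrix_apply, iterateFrobenius_def,
    traceForm_pow_two_pow_of_charTwo]

end CharTwo

theorem traceForm_baseChange {R S : Type*} [CommRing R] [CommRing S] [Algebra R S]
    [Module.Free R S] [Module.Finite R S] (A : Type*) [CommRing A] [Algebra R A] :
    (traceForm R S).baseChange A = traceForm A (A ⊗[R] S) := by
  ext x y
  simp [trace_apply, ← baseChange_lmul, algebraMap_eq_smul_one]

end Algebra

theorem Module.Basis.linearIndependent_pow_two_pow_of_charTwo {k L ι : Type*} [Field k]
    [CharP k 2] [CommRing L] [Algebra k L] [Fintype ι]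
    (hnd : (Algebra.traceForm k L).Nondegenerate) (b : Module.Basis ι k L) (n : ℕ) :
    LinearIndependent k (fun i => b i ^ 2 ^ n) := by
  classical
  have : Module.Finite k L := .of_basis b
  have hdet : (Algebra.traceMatrix k b).det ≠ 0 := by
    rwa [Algebra.traceMatrix_of_basis, ← LinearMap.BilinForm.nondegenerate_iff_det_ne_zero]
  by_contra h
  have hdiscr := Algebra.discr_zero_of_not_linearIndependent k h
  rw [Algebra.discr_def, Algebra.traceMatrix_pow_two_pow_of_charTwo, ← RingHom.mapMatrix_apply,
    ← RingHom.map_det, iterateFrobenius_def] at hdiscr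
  exact hdet (eq_zero_of_pow_eq_zero hdiscr)

theorem IsPurelyInseparable.exists_pow_pow_eq_one_tmul {k K R : Type*} [Field k] [Field K]
    [Algebra k K] [IsPurelyInseparable k K] [CommRing R] [Algebra k R] (q : ℕ) [ExpChar k q]
    (x : K ⊗[k] R) : ∃ n, ∃ r : R, x ^ q ^ n = 1 ⊗ₜ r := by
  obtain ⟨n, r, hr⟩ :=
    exists_pow_pow_mem_range_tensorProduct_of_expChar q (Algebra.TensorProduct.comm k K R x)
  refine ⟨n, r, (Algebra.TensorProduct.comm k K R).injective ?_⟩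
  rw [map_pow, ← hr]
  rfl

theorem AlgHom.toLinearMap_baseChange {R A B C : Type*} [CommRing R] [CommRing A] [Algebra R A]
    [CommRing B] [Algebra R B] [CommRing C] [Algebra R C] (f : B →ₐ[R] C) :
    f.toLinearMap.baseChange A = (Algebra.TensorProduct.map (AlgHom.id A A) f).toLinearMap := by
  ext
  simp

theorem LinearMap.BilinForm.Nondegenerate.injective_of_isometry {R M M' : Type*} [CommRing R]
    [AddCommGroup M] [Module R M] [AddCommGroup M'] [Module R M']
    {Q : LinearMap.BilinForm R M} {Q' : LinearMap.BilinForm R M'} (hQ : Q.Nondegenerate)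
    {f : M →ₗ[R] M'} (hf : ∀ x y, Q' (f x) (f y) = Q x y) : Function.Injective f := by
  rw [← LinearMap.ker_eq_bot, Submodule.eq_bot_iff]
  intro x hx
  exact hQ.1 x fun y => by rw [← hf, LinearMap.mem_ker.mp hx, map_zero, LinearMap.zero_apply]

theorem Module.Basis.constr_orbit_map_smul {R G M M' : Type*} [CommSemiring R] [Monoid G]
    [AddCommMonoid M] [Module R M] [DistribMulAction G M] [SMulCommClass G R M]
    [AddCommMonoid M'] [Module R M'] [DistribMulAction G M'] [SMulCommClass G R M']
    (b : Module.Basis G R M) {w : M} (hb : ∀ g, b g = g • w) (u : M') (g : G) (x : M) :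
    b.constr R (fun h => h • u) (g • x) = g • b.constr R (fun h => h • u) x := by
  have : b.constr R (fun h => h • u) ∘ₗ DistribSMul.toLinearMap R M g =
      DistribSMul.toLinearMap R M' g ∘ₗ b.constr R (fun h => h • u) := by
    refine b.ext fun h => ?_
    rw [LinearMap.comp_apply, LinearMap.comp_apply, DistribSMul.toLinearMap_apply,
      DistribSMul.toLinearMap_apply, hb, ← mul_smul, ← hb, ← hb, b.constr_basis,
      b.constr_basis, mul_smul]
  exact LinearMap.congr_fun this x

theorem exists_equivariant_isometry_of_normalBasis {k G M M' : Type*} [Field k] [Monoid G]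
    [Fintype G] [AddCommGroup M] [Module k M] [DistribMulAction G M] [SMulCommClass G k M]
    [AddCommGroup M'] [Module k M'] [DistribMulAction G M'] [SMulCommClass G k M']
    [FiniteDimensional k M']
    {Q : LinearMap.BilinForm k M} {Q' : LinearMap.BilinForm k M'} (hQ : Q.Nondegenerate)
    (b : Module.Basis G k M) {w : M} (hb : ∀ g, b g = g • w)
    (hdim : Module.finrank k M' = Fintype.card G) (u : M')
    (hu : ∀ g₁ g₂ : G, Q' (g₁ • u) (g₂ • u) = Q (g₁ • w) (g₂ • w)) :
    ∃ θ₀ : M ≃ₗ[k] M', (∀ (g : G) (x : M), θ₀ (g • x) = g • θ₀ x) ∧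
      ∀ x y : M, Q' (θ₀ x) (θ₀ y) = Q x y := by
  set f := b.constr k (fun h => h • u)
  have hisom : ∀ x y, Q' (f x) (f y) = Q x y := by
    have : Q'.compl₁₂ f f = Q := LinearMap.ext_basis b b fun g₁ g₂ => by
      rw [LinearMap.compl₁₂_apply, b.constr_basis, b.constr_basis, hb, hb, hu]
    exact fun x y => LinearMap.congr_fun (LinearMap.congr_fun this x) y
  have : FiniteDimensional k M := .of_basis b
  have hinj := hQ.injective_of_isometry hisom
  have hsurj := (LinearMap.injective_iff_surjective_of_finrank_eq_finrank
    (by rw [Module.finrank_eq_card_basis b, hdim])).mp hinj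
  exact ⟨.ofBijective f ⟨hinj, hsurj⟩, b.constr_orbit_map_smul hb u, hisom⟩

theorem traceForm_orbit_eq_of_baseChange_isometry {k k' G L L' : Type*} [Field k] [CharP k 2]
    [Field k'] [Algebra k k'] [Monoid G]
    [CommRing L] [Algebra k L] [MulSemiringAction G L] [SMulCommClass G k L] [Module.Finite k L]
    [CommRing L'] [Algebra k L'] [MulSemiringAction G L'] [SMulCommClass G k L']
    [Module.Finite k L'] (θ : (k' ⊗[k] L) ≃ₗ[k'] (k' ⊗[k] L'))
    (hequiv : ∀ (g : G) (u : k' ⊗[k] L),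
      θ (LinearMap.baseChange k' (DistribSMul.toLinearMap k L g) u) =
        LinearMap.baseChange k' (DistribSMul.toLinearMap k L' g) (θ u))
    (hform : ∀ u v : k' ⊗[k] L,
      (Algebra.traceForm k L').baseChange k' (θ u) (θ v) =
        (Algebra.traceForm k L).baseChange k' u v)
    {v : L} {u : L'} {n : ℕ} (hu : θ (1 ⊗ₜ v) ^ 2 ^ n = 1 ⊗ₜ u) (g₁ g₂ : G) :
    Algebra.traceForm k L' (g₁ • u) (g₂ • u) =
      Algebra.traceForm k L (g₁ • v ^ 2 ^ n) (g₂ • v ^ 2 ^ n) := by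
  have : CharP k' 2 := charP_of_injective_algebraMap (algebraMap k k').injective 2
  let act (g : G) : k' ⊗[k] L' →ₐ[k'] k' ⊗[k] L' :=
    Algebra.TensorProduct.map (AlgHom.id k' k') (MulSemiringAction.toAlgHom k L' g)
  have horbit (g : G) : act g (θ (1 ⊗ₜ v)) = θ (1 ⊗ₜ (g • v)) := by
    rw [← AlgHom.toLinearMap_apply, ← AlgHom.toLinearMap_baseChange]
    exact (hequiv g _).symm
  apply (algebraMap k k').injective
  calc algebraMap k k' (Algebra.traceForm k L' (g₁ • u) (g₂ • u))
      = Algebra.traceForm k' (k' ⊗[k] L') (act g₁ (1 ⊗ₜ u)) (act g₂ (1 ⊗ₜ u)) := by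
        simp [act, ← Algebra.traceForm_baseChange, Algebra.algebraMap_eq_smul_one]
    _ = Algebra.traceForm k' (k' ⊗[k] L') (act g₁ (θ (1 ⊗ₜ v)))
          (act g₂ (θ (1 ⊗ₜ v))) ^ 2 ^ n := by
        rw [← hu, map_pow (act g₁), map_pow (act g₂),
          Algebra.traceForm_pow_two_pow_of_charTwo]
    _ = algebraMap k k' (Algebra.traceForm k L (g₁ • v) (g₂ • v)) ^ 2 ^ n := by
        rw [horbit, horbit, ← Algebra.traceForm_baseChange, hform]
        simp [Algebra.algebraMap_eq_smul_one]
    _ = algebraMap k k' (Algebra.traceForm k L (g₁ • v ^ 2 ^ n) (g₂ • v ^ 2 ^ n)) := by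
        rw [← map_pow, smul_pow', smul_pow', Algebra.traceForm_pow_two_pow_of_charTwo]

/-- Serre's proposition 6.2.1: `G`-trace forms of `G`-Galois algebras over a field `k`
of characteristic 2 that become isomorphic over a purely inseparable extension `k'` of
`k` are already isomorphic over `k`. Here the isomorphism over `k'` is a `k'`-linear
bijection `θ : k' ⊗ₖ L → k' ⊗ₖ L'` commuting with the (base-changed) `G`-actions and
carrying the base change of the trace form of `L` to that of `L'`. -/
theorem stmt_13 (k k' G L L' : Type*) [Field k] [CharP k 2] [Field k'] [Algebra k k']
    [IsPurelyInseparable k k'] [Group G] [Fintype G]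
    [CommRing L] [Algebra k L] [MulSemiringAction G L] [SMulCommClass G k L]
    [CommRing L'] [Algebra k L'] [MulSemiringAction G L'] [SMulCommClass G k L']
    (hL : IsGaloisAlgebra k G L) (hL' : IsGaloisAlgebra k G L')
    (θ : (k' ⊗[k] L) ≃ₗ[k'] (k' ⊗[k] L'))
    (hequiv : ∀ (g : G) (u : k' ⊗[k] L),
      θ (LinearMap.baseChange k' (DistribMulAction.toLinearMap k L g) u) =
        LinearMap.baseChange k' (DistribMulAction.toLinearMap k L' g) (θ u))
    (hform : ∀ u v : k' ⊗[k] L,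
      (Algebra.traceForm k L').baseChange k' (θ u) (θ v) =
        (Algebra.traceForm k L).baseChange k' u v) :
    ∃ θ₀ : L ≃ₗ[k] L', (∀ (g : G) (x : L), θ₀ (g • x) = g • θ₀ x) ∧
      ∀ x y : L, Algebra.traceForm k L' (θ₀ x) (θ₀ y) = Algebra.traceForm k L x y := by
  obtain ⟨hnd, v, hli, hspan⟩ := hL
  obtain ⟨-, v', hli', hspan'⟩ := hL'
  let B := Module.Basis.mk hli hspan.ge
  let B' := Module.Basis.mk hli' hspan'.ge
  have : Module.Finite k L := .of_basis B
  have : Module.Finite k L' := .of_basis B'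
  obtain ⟨n, u, hu⟩ := IsPurelyInseparable.exists_pow_pow_eq_one_tmul 2 (θ (1 ⊗ₜ v))
  have hli_pow : LinearIndependent k fun g : G => g • v ^ 2 ^ n := by
    simpa [B, smul_pow'] using B.linearIndependent_pow_two_pow_of_charTwo hnd n
  have hcard : Fintype.card G = Module.finrank k L := (Module.finrank_eq_card_basis B).symm
  exact exists_equivariant_isometry_of_normalBasis hnd
    (basisOfLinearIndependentOfCardEqFinrank hli_pow hcard)
    (congrFun (coe_basisOfLinearIndependentOfCardEqFinrank hli_pow hcard))
    (Module.finrank_eq_card_basis B') u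
    (traceForm_orbit_eq_of_baseChange_isometry θ hequiv hform hu)
end

section
/- Let k be a field of characteristic 2, G a finite group, L a G-Galois algebra over k, and s ∈ G an element with s² = 1 and s ≠ 1. Then Tr_{L/k}(x · (s • x)) = 0 for every x ∈ L. -/
/-!
In a normal basis `(g • v)_{g ∈ G}` the diagonal entry of multiplication by `z` at `h` is the
`v`-coordinate of `(h⁻¹ • z) * v`, so `Tr(z)` is the `v`-coordinate of `(∑ h, h • z) * v`.
For `z = x * s • x`, which is fixed by `s`, the terms `h • z` and `(h * s) • z` of that sum
coincide and cancel in characteristic 2.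
-/

theorem Finset.sum_smul_eq_zero_of_smul_eq_self {G M : Type*} [Group G] [Fintype G]
    [AddCommMonoid M] [MulAction G M] (hM : ∀ y : M, y + y = 0) {s : G} (hs : s ^ 2 = 1)
    (hs1 : s ≠ 1) {z : M} (hz : s • z = z) : ∑ h : G, h • z = 0 := by
  refine Finset.sum_ninvolution (fun h => h * s) (fun h => ?_) (fun h _ hh => ?_)
    (fun _ => Finset.mem_univ _) (fun h => ?_)
  · rw [mul_smul, hz, hM]
  · exact hs1 (mul_eq_left.mp hh)
  · rw [mul_assoc, ← pow_two, hs, mul_one]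

namespace Module.Basis

variable {k G L : Type*} [CommRing k] [Group G]

theorem repr_smul_mul_of_apply_eq_smul [AddCommGroup L] [Module k L] [DistribMulAction G L]
    [SMulCommClass G k L] (b : Basis G k L) (hb : ∀ g, b g = g • b 1) (u : G) (w : L)
    (g : G) : b.repr (u • w) (u * g) = b.repr w g := by
  have smul_basis : ∀ i, u • b i = b (u * i) := fun i => by rw [hb i, hb (u * i), mul_smul]
  have key : (Finsupp.lapply (u * g)).comp
      (b.repr.toLinearMap.comp (DistribSMul.toLinearMap k L u)) =
      (Finsupp.lapply g).comp b.repr.toLinearMap :=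
    b.ext fun i => by simp [DistribSMul.toLinearMap_apply, smul_basis,
      Finsupp.single_apply_left (mul_right_injective u)]
  exact LinearMap.congr_fun key w

theorem trace_eq_repr_sum_smul_mul [Fintype G] [CommRing L] [Algebra k L]
    [MulSemiringAction G L] [SMulCommClass G k L] (b : Basis G k L)
    (hb : ∀ g, b g = g • b 1) (z : L) :
    Algebra.trace k L z = b.repr ((∑ h : G, h • z) * b 1) 1 := by
  classical
  have diag : ∀ h, Algebra.leftMulMatrix b z h h = b.repr ((h⁻¹ • z) * b 1) 1 := fun h => by
    have := b.repr_smul_mul_of_apply_eq_smul hb h ((h⁻¹ • z) * b 1) 1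
    rw [mul_one, smul_mul', smul_inv_smul, ← hb] at this
    rwa [Algebra.leftMulMatrix_eq_repr_mul]
  have sum_inv : ∑ h : G, h⁻¹ • z = ∑ h : G, h • z :=
    Fintype.sum_equiv (Equiv.inv G) _ _ fun _ => rfl
  rw [Algebra.trace_eq_matrix_trace b, Matrix.trace]
  simp only [Matrix.diag_apply, diag]
  rw [← Finsupp.finsetSum_apply, ← map_sum, ← Finset.sum_mul, sum_inv]

end Module.Basis

/-- Serre's condition (7.4.1): for a `G`-Galois algebra `L` over a field `k` of
characteristic 2 and an element `s ∈ G` of order 2, one has `Tr_{L/k}(x · s•x) = 0`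
for all `x ∈ L`. -/
theorem stmt_14 (k G L : Type*) [Field k] [CharP k 2] [Group G] [Fintype G]
    [CommRing L] [Algebra k L] [MulSemiringAction G L] [SMulCommClass G k L]
    (hL : IsGaloisAlgebra k G L) (s : G) (hs : s ^ 2 = 1) (hs1 : s ≠ 1) (x : L) :
    Algebra.trace k L (x * (s • x)) = 0 := by
  obtain ⟨-, v, hli, hspan⟩ := hL
  let b : Module.Basis G k L := .mk hli hspan.ge
  have hb : ∀ g, b g = g • b 1 := fun g => by simp [b]
  have add_self_eq_zero : ∀ y : L, y + y = 0 := fun y => by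
    rw [← two_smul k y, CharTwo.two_eq_zero, zero_smul]
  have fixed : s • (x * s • x) = x * s • x := by
    rw [smul_mul', smul_smul, ← pow_two, hs, one_smul, mul_comm]
  rw [b.trace_eq_repr_sum_smul_mul hb,
    Finset.sum_smul_eq_zero_of_smul_eq_self add_self_eq_zero hs hs1 fixed, zero_mul, map_zero,
    Finsupp.zero_apply]
end

section
/- Let k be a field of characteristic 2, G a finite group, and h a hermitian element of k[G]. Define the symmetric bilinear form q_h on k[G] by q_h(a, b) = δ(a·h·b*), where δ(x) denotes the coefficient of the identity element in x. Then q_h(x, s·x) = 0 for every x ∈ k[G] and every s ∈ G of order 2, if and only if δ_s(h) = 0 for every s ∈ G of order 2. -/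
open Finset

theorem CharTwo.sum_sum_eq_sum_diag_of_symm_s15 {ι R : Type*} [Semiring R] [CharP R 2]
    (s : Finset ι) (f : ι → ι → R) (hf : ∀ i j, f i j = f j i) :
    ∑ i ∈ s, ∑ j ∈ s, f i j = ∑ i ∈ s, f i i := by
  classical
  have hoff : ∑ p ∈ s.offDiag, f p.1 p.2 = 0 :=
    sum_involution (fun p _ ↦ p.swap) (fun p _ ↦ by simp [hf p.2 p.1])
      (fun p hp _ h ↦ (mem_offDiag.1 hp).2.2 (congrArg Prod.fst h).symm)
      (fun p hp ↦ by
        obtain ⟨h₁, h₂, hne⟩ := mem_offDiag.1 hp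
        exact mem_offDiag.2 ⟨h₂, h₁, hne.symm⟩)
      (fun _ _ ↦ rfl)
  rw [← sum_product' s s f, ← diag_union_offDiag, sum_union (disjoint_diag_offDiag s), hoff,
    add_zero, sum_diag]

section GroupAlgebra

variable {k G : Type*}

theorem gStar_coeff [Semiring k] [Group G] (x : MonoidAlgebra k G) (g : G) :
    (gStar x).coeff g = x.coeff g⁻¹ :=
  rfl

theorem coeff_inv_eq_of_gStar_eq_self [Semiring k] [Group G] {h : MonoidAlgebra k G}
    (hh : gStar h = h) (g : G) : h.coeff g⁻¹ = h.coeff g := by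
  rw [← gStar_coeff, hh]

variable [Fintype G]

theorem MonoidAlgebra.coeff_mul_eq_sum [Semiring k] [Group G] (x y : MonoidAlgebra k G) (g : G) :
    (x * y).coeff g = ∑ a, x.coeff a * y.coeff (a⁻¹ * g) := by
  rw [coeff_mul_apply_left, Finsupp.sum_fintype _ _ fun _ ↦ zero_mul _]

theorem coeff_one_mul_gStar [Semiring k] [Group G] (x y : MonoidAlgebra k G) :
    (x * gStar y).coeff 1 = ∑ g, x.coeff g * y.coeff g := by
  simp [MonoidAlgebra.coeff_mul_eq_sum, gStar_coeff]

theorem coeff_one_mul_mul_gStar_eq_sum_sq_of_inv_eq_self [CommRing k] [CharP k 2] [Group G]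
    {h : MonoidAlgebra k G} (hh : gStar h = h) {s : G} (hs : s⁻¹ = s) (x : MonoidAlgebra k G) :
    (x * h * gStar (MonoidAlgebra.of k G s * x)).coeff 1 =
      ∑ a, x.coeff a ^ 2 * h.coeff (a⁻¹ * s * a) := by
  have hsymm (a b : G) : h.coeff (b⁻¹ * s * a) = h.coeff (a⁻¹ * s * b) := by
    rw [← coeff_inv_eq_of_gStar_eq_self hh]
    simp [mul_assoc, hs]
  calc (x * h * gStar (MonoidAlgebra.of k G s * x)).coeff 1
      = ∑ b, ∑ a, x.coeff a * h.coeff (a⁻¹ * (s * b)) * x.coeff b := by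
        rw [coeff_one_mul_gStar, ← Equiv.sum_comp (Equiv.mulLeft s)]
        simp [MonoidAlgebra.of_apply, MonoidAlgebra.coeff_mul_eq_sum (y := h), sum_mul]
    _ = ∑ a, ∑ b, x.coeff a * x.coeff b * h.coeff (a⁻¹ * s * b) := by
        rw [sum_comm]
        simp only [mul_assoc, mul_comm (h.coeff _)]
    _ = ∑ a, x.coeff a ^ 2 * h.coeff (a⁻¹ * s * a) := by
        rw [CharTwo.sum_sum_eq_sum_diag_of_symm_s15 _ _ fun a b ↦ by rw [hsymm, mul_comm (x.coeff a)]]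
        simp only [sq]

end GroupAlgebra

/-- Serre's proposition 7.6.6: let `k` be a field of characteristic 2, `G` a finite
group, and `h` a hermitian element of `k[G]`; let `q_h(a,b) = δ(a·h·b*)` be the
associated `G`-invariant symmetric bilinear form (`δ` = coefficient of `1`). Then
`q_h(x, s·x) = 0` for every `x ∈ k[G]` and every `s ∈ G` of order 2 if and only if
`δ_s(h) = 0` for every `s ∈ G` of order 2. -/
theorem stmt_15 (k G : Type*) [Field k] [CharP k 2] [Group G] [Fintype G]
    (h : MonoidAlgebra k G) (hherm : gStar h = h) :
    (∀ s : G, orderOf s = 2 → ∀ x : MonoidAlgebra k G,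
        (x * h * gStar (MonoidAlgebra.of k G s * x)).coeff 1 = 0) ↔
      ∀ s : G, orderOf s = 2 → h.coeff s = 0 := by
  have hq (s : G) (hs : orderOf s = 2) :=
    coeff_one_mul_mul_gStar_eq_sum_sq_of_inv_eq_self hherm (inv_eq_self_of_orderOf_eq_two hs)
  constructor
  · intro H s hs
    rw [← H s hs 1, hq s hs, Fintype.sum_eq_single 1 fun a ha ↦ by simp [MonoidAlgebra.one_def, ha]]
    simp [MonoidAlgebra.one_def]
  · intro H s hs x
    rw [hq s hs]
    refine sum_eq_zero fun a _ ↦ ?_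
    have hconj : SemiconjBy a⁻¹ s (a⁻¹ * s * a) := by simp [SemiconjBy, mul_assoc]
    rw [H _ (hconj.orderOf_eq ▸ hs), mul_zero]
end

section
/- Let k be a field of characteristic 2 and L/k a finite Galois field extension with Galois group G. Let ε : G → ℤ/2ℤ be a nontrivial homomorphism with ε(g) = 0 for every g ∈ G with g² = 1, set G_c = {g ∈ G : ε(g) = 1}, and let S ⊆ G_c satisfy S ∩ S⁻¹ = ∅ and S ∪ S⁻¹ = G_c. Let v ∈ L be such that (g(v))_{g ∈ G} is a k-basis of L and Tr_{L/k}(v) = 1, and set y = Σ_{g : ε(g)=0} g(v) and z = Σ_{g : ε(g)=1} g(v). Then y·z = Σ_{s∈S} Tr_{L/k}(v·s(v)), viewed as an element of k inside L. -/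
open scoped Classical

/-- Serre's lemma 7.8.27: let `L/k` be a finite Galois extension of fields of
characteristic 2 with group `G`, `ε : G → ℤ/2ℤ` a nontrivial essential character,
`S ⊆ G_c = {g | ε g = 1}` with `S ∩ S⁻¹ = ∅` and `S ∪ S⁻¹ = G_c`, and `v ∈ L` a
normal-basis generator with `Tr_{L/k}(v) = 1`. Setting `y = Σ_{ε(g)=0} g(v)` and
`z = Σ_{ε(g)=1} g(v)`, one has `y·z = Σ_{s∈S} Tr_{L/k}(v·s(v))`, an element of `k`
viewed inside `L`. -/
theorem stmt_19 (k L : Type*) [Field k] [CharP k 2] [Field L] [Algebra k L]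
    [FiniteDimensional k L] [IsGalois k L]
    (ε : (L ≃ₐ[k] L) → ZMod 2) (hhom : ∀ a b : L ≃ₐ[k] L, ε (a * b) = ε a + ε b)
    (hess : ∀ g : L ≃ₐ[k] L, g ^ 2 = 1 → ε g = 0) (hnt : ∃ g : L ≃ₐ[k] L, ε g ≠ 0)
    (S : Finset (L ≃ₐ[k] L)) (hS1 : ∀ s ∈ S, ε s = 1) (hS2 : ∀ s ∈ S, s⁻¹ ∉ S)
    (hS3 : ∀ g : L ≃ₐ[k] L, ε g = 1 → g ∈ S ∨ g⁻¹ ∈ S)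
    (v : L) (hv1 : LinearIndependent k (fun σ : L ≃ₐ[k] L => σ v))
    (hv2 : Submodule.span k (Set.range fun σ : L ≃ₐ[k] L => σ v) = ⊤)
    (hv3 : Algebra.trace k L v = 1) :
    (∑ g ∈ Finset.univ.filter fun g : L ≃ₐ[k] L => ε g = 0, g v) *
        (∑ g ∈ Finset.univ.filter fun g : L ≃ₐ[k] L => ε g = 1, g v) =
      algebraMap k L (∑ s ∈ S, Algebra.trace k L (v * s v)) := by
  classical
  have h1 : ε 1 = 0 := hess 1 (one_pow 2)
  have hinv : ∀ g : L ≃ₐ[k] L, ε g⁻¹ = ε g := by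
    intro g
    have h := hhom g g⁻¹
    rw [mul_inv_cancel, h1] at h
    have : ∀ x y : ZMod 2, (0 : ZMod 2) = x + y → y = x := by decide
    exact this _ _ h
  have hone : ∀ x : ZMod 2, x ≠ 0 → x = 1 := by decide
  -- rewrite RHS as sum over automorphisms
  rw [map_sum]
  have hRHS : ∀ s : L ≃ₐ[k] L,
      algebraMap k L (Algebra.trace k L (v * s v)) = ∑ σ : L ≃ₐ[k] L, (σ v * (σ * s) v) := by
    intro s
    rw [trace_eq_sum_automorphisms]
    exact Finset.sum_congr rfl fun σ _ => by rw [map_mul]; rfl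
  simp only [hRHS]
  rw [← Finset.sum_product']
  rw [Finset.sum_mul_sum, ← Finset.sum_product']
  refine Finset.sum_nbij'
    (fun p => if p.1⁻¹ * p.2 ∈ S then (p.1⁻¹ * p.2, p.1) else (p.2⁻¹ * p.1, p.2))
    (fun q => if ε q.2 = 0 then (q.2, q.2 * q.1) else (q.2 * q.1, q.2)) ?_ ?_ ?_ ?_ ?_
  · rintro ⟨a, b⟩ hp
    simp only [Finset.mem_product, Finset.mem_filter, Finset.mem_univ, true_and] at hp ⊢
    obtain ⟨ha, hb⟩ := hp
    have hc : ε (a⁻¹ * b) = 1 := by rw [hhom, hinv, ha, hb]; rfl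
    rcases hS3 _ hc with h | h
    · simp [h]
    · rw [mul_inv_rev, inv_inv] at h
      have hns : a⁻¹ * b ∉ S := fun hmem => hS2 _ hmem (by simpa using h)
      simp [hns, h]
  · rintro ⟨s, σ⟩ hq
    simp only [Finset.mem_product, Finset.mem_univ, and_true] at hq
    have hs : ε s = 1 := hS1 _ hq
    by_cases hσ : ε σ = 0
    · simp only [hσ, if_true]
      refine Finset.mem_product.mpr ⟨Finset.mem_filter.mpr ⟨Finset.mem_univ _, hσ⟩,
        Finset.mem_filter.mpr ⟨Finset.mem_univ _, ?_⟩⟩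
      rw [hhom, hσ, hs]; rfl
    · simp only [hσ, if_false]
      refine Finset.mem_product.mpr ⟨Finset.mem_filter.mpr ⟨Finset.mem_univ _, ?_⟩,
        Finset.mem_filter.mpr ⟨Finset.mem_univ _, hone _ hσ⟩⟩
      rw [hhom, hone _ hσ, hs]; decide
  · rintro ⟨a, b⟩ hp
    simp only [Finset.mem_product, Finset.mem_filter, Finset.mem_univ, true_and] at hp
    obtain ⟨ha, hb⟩ := hp
    by_cases h : a⁻¹ * b ∈ S
    · simp [h, ha, mul_inv_cancel_left]
    · have : ε b ≠ 0 := by rw [hb]; decide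
      simp [h, this, mul_inv_cancel_left]
  · rintro ⟨s, σ⟩ hq
    simp only [Finset.mem_product, Finset.mem_univ, and_true] at hq
    by_cases hσ : ε σ = 0
    · simp only [hσ, if_true]
      simp [inv_mul_cancel_left, hq]
    · simp only [hσ, if_false]
      have hns : (σ * s)⁻¹ * σ ∉ S := by
        rw [mul_inv_rev, mul_assoc, inv_mul_cancel, mul_one]
        exact hS2 _ hq
      rw [if_neg hns, inv_mul_cancel_left]
  · rintro ⟨a, b⟩ hp
    by_cases h : a⁻¹ * b ∈ S
    · simp only [h, if_true]
      rw [mul_inv_cancel_left]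
    · simp only [h, if_false]
      rw [mul_inv_cancel_left, mul_comm]
end
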